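/- arXiv:1704.07650 — 4 statements merged into one kernel-verified Lean document; each statement's English description precedes it below -/
import Mathlib

section
/- For every p with 1 ≤ p < ∞ and every smooth compactly supported function v : Ω_Ψ → ℝ one has ((2+α)/2)^{1−p/2} ∫_Ω |Jv(x)|^p |x|^{−(N−2)α(p−2)/4} a(x) dx = ∫_{Ω_Ψ} |v(y)|^p m̃(y) dy, where Jv(x) = √((2+α)/2) |x|^{(N−2)α/4} v(Ψ(x)). -/
open MeasureTheory Real Matrix


noncomputable def stmt4D {N : ℕ} (α : ℝ) (x : EuclideanSpace ℝ (Fin N)) :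
    EuclideanSpace ℝ (Fin N) →L[ℝ] EuclideanSpace ℝ (Fin N) :=
  ‖x‖ ^ (α / 2) • ContinuousLinearMap.id ℝ _ +
    ((α / 2) * ‖x‖ ^ (α / 2 - 2)) • ((innerSL ℝ x).smulRight x)

lemma stmt4_sq_rpow {r c : ℝ} (hr : 0 ≤ r) : (r ^ 2) ^ c = r ^ (2 * c) := by
  rw [← Real.rpow_natCast r 2, ← Real.rpow_mul hr]
  norm_num

lemma stmt4_hasFDerivAt {N : ℕ} (α : ℝ) (x : EuclideanSpace ℝ (Fin N)) (hx : x ≠ 0) :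
    HasFDerivAt (fun y : EuclideanSpace ℝ (Fin N) => ‖y‖ ^ (α / 2) • y) (stmt4D α x) x := by
  have hxx : (0 : ℝ) < inner ℝ x x := by
    rw [real_inner_self_eq_norm_sq]; exact pow_pos (norm_pos_iff.mpr hx) 2
  have h1 := (hasFDerivAt_id x).inner ℝ (hasFDerivAt_id x)
  have h2 := h1.rpow_const (p := α / 4) (Or.inl hxx.ne')
  have h3 := h2.smul (hasFDerivAt_id x)
  have heq : (fun y : EuclideanSpace ℝ (Fin N) => ‖y‖ ^ (α / 2) • y)
      = fun y => ((inner ℝ y y : ℝ)) ^ (α / 4) • y := by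
    funext y
    rw [real_inner_self_eq_norm_sq, stmt4_sq_rpow (norm_nonneg y),
      show 2 * (α / 4) = α / 2 by ring]
  rw [heq]
  refine h3.congr_fderiv ?_
  refine ContinuousLinearMap.ext fun h => ?_
  have hnorm : ((inner ℝ x x : ℝ)) ^ (α / 4 - 1) = ‖x‖ ^ (α / 2 - 2) := by
    rw [real_inner_self_eq_norm_sq, stmt4_sq_rpow (norm_nonneg x),
      show 2 * (α / 4 - 1) = α / 2 - 2 by ring]
  have hnorm2 : ((inner ℝ x x : ℝ)) ^ (α / 4) = ‖x‖ ^ (α / 2) := by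
    rw [real_inner_self_eq_norm_sq, stmt4_sq_rpow (norm_nonneg x),
      show 2 * (α / 4) = α / 2 by ring]
  simp only [stmt4D, ContinuousLinearMap.add_apply, ContinuousLinearMap.smul_apply,
    ContinuousLinearMap.id_apply, ContinuousLinearMap.coe_smul', Pi.smul_apply,
    ContinuousLinearMap.smulRight_apply, innerSL_apply_apply, ContinuousLinearMap.coe_comp',
    Function.comp_apply, ContinuousLinearMap.prod_apply, fderivInnerCLM_apply, id_eq]
  rw [hnorm, hnorm2, real_inner_comm h x]
  congr 1
  rw [smul_eq_mul, smul_smul]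
  congr 1
  ring

lemma stmt4_det {N : ℕ} (α : ℝ) (x : EuclideanSpace ℝ (Fin N)) (hx : x ≠ 0) :
    (stmt4D α x).det = (1 + α / 2) * (‖x‖ ^ (α / 2)) ^ N := by
  classical
  have hr : (0 : ℝ) < ‖x‖ := norm_pos_iff.mpr hx
  set b := (EuclideanSpace.basisFun (Fin N) ℝ).toBasis with hb
  rw [ContinuousLinearMap.det, ← LinearMap.det_toMatrix b]
  have hpow : ‖x‖ ^ (α / 2 - 2) = ‖x‖ ^ (α / 2) * ‖x‖ ^ (-2 : ℝ) := by
    rw [← Real.rpow_add hr]; ring_nf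
  have hM : LinearMap.toMatrix b b (stmt4D α x) =
      (‖x‖ ^ (α / 2)) • (1 + Matrix.replicateCol Unit (fun i => (α / 2 * ‖x‖ ^ (-2 : ℝ)) * x i)
        * Matrix.replicateRow Unit (fun j => x j)) := by
    ext i j
    rw [LinearMap.toMatrix_apply]
    simp only [hb, OrthonormalBasis.coe_toBasis_repr_apply, OrthonormalBasis.coe_toBasis,
      EuclideanSpace.basisFun_apply, EuclideanSpace.basisFun_repr, stmt4D,
      ContinuousLinearMap.coe_coe, ContinuousLinearMap.add_apply,
      ContinuousLinearMap.smul_apply, ContinuousLinearMap.id_apply,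
      ContinuousLinearMap.smulRight_apply, innerSL_apply_apply,
      Matrix.smul_apply, Matrix.add_apply, Matrix.one_apply, Matrix.mul_apply,
      Matrix.replicateCol_apply, Matrix.replicateRow_apply, Finset.univ_unique, Finset.sum_singleton,
      PiLp.add_apply, PiLp.smul_apply, smul_eq_mul, EuclideanSpace.inner_single_right,
      RCLike.inner_apply, conj_trivial, hpow]
    rcases eq_or_ne i j with h | h
    · subst h; simp [EuclideanSpace.single_apply]; ring
    · simp [EuclideanSpace.single_apply, h, Ne.symm h]; ring
  rw [hM, Matrix.det_smul, Matrix.det_one_add_replicateCol_mul_replicateRow]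
  have hsum : ∑ i, x i * x i = ‖x‖ ^ 2 := by
    rw [← real_inner_self_eq_norm_sq]
    simp only [PiLp.inner_apply, RCLike.inner_apply, conj_trivial]
  have hdot : (fun j => x j) ⬝ᵥ (fun i => (α / 2 * ‖x‖ ^ (-2 : ℝ)) * x i) = α / 2 := by
    have h2 : ‖x‖ ^ (-2 : ℝ) * ‖x‖ ^ 2 = 1 := by
      rw [← Real.rpow_natCast ‖x‖ 2, ← Real.rpow_add hr]
      norm_num
    simp only [dotProduct]
    calc (∑ i, x i * (α / 2 * ‖x‖ ^ (-2 : ℝ) * x i))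
        = (α / 2 * ‖x‖ ^ (-2 : ℝ)) * ∑ i, x i * x i := by
          rw [Finset.mul_sum]; congr 1; funext i; ring
      _ = α / 2 := by rw [hsum, mul_assoc, h2, mul_one]
  rw [hdot, Fintype.card_fin]
  ring

lemma stmt4_scalar (N : ℕ) (α p r V w : ℝ) (hα : 0 < α) (hr : 0 < r) :
    ((2 + α) / 2) ^ (1 - p / 2) *
      (|Real.sqrt ((2 + α) / 2) * r ^ (((N : ℝ) - 2) * α / 4) * V| ^ p *
        r ^ (-(((N : ℝ) - 2) * α * (p - 2) / 4)) * w)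
    = ((1 + α / 2) * (r ^ (α / 2)) ^ N) * (|V| ^ p * (r ^ (-α) * w)) := by
  have hc : (0 : ℝ) < (2 + α) / 2 := by linarith
  rw [abs_mul, abs_mul, abs_of_nonneg (Real.sqrt_nonneg _),
    abs_of_nonneg (Real.rpow_nonneg hr.le _),
    Real.mul_rpow (by positivity) (abs_nonneg V),
    Real.mul_rpow (Real.sqrt_nonneg _) (Real.rpow_nonneg hr.le _),
    Real.sqrt_eq_rpow,
    ← Real.rpow_natCast (r ^ (α / 2)) N,
    ← Real.rpow_mul hc.le, ← Real.rpow_mul hr.le, ← Real.rpow_mul hr.le]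
  have e1 : ((2 + α) / 2) ^ (1 - p / 2) * ((2 + α) / 2) ^ (1 / 2 * p) = 1 + α / 2 := by
    rw [← Real.rpow_add hc, show 1 - p / 2 + 1 / 2 * p = 1 by ring, Real.rpow_one]; ring
  have e2 : r ^ (((N : ℝ) - 2) * α / 4 * p) * r ^ (-(((N : ℝ) - 2) * α * (p - 2) / 4))
      = r ^ (α / 2 * (N : ℝ)) * r ^ (-α) := by
    rw [← Real.rpow_add hr, ← Real.rpow_add hr]; congr 1; ring
  linear_combination (|V| ^ p * w * (r ^ (((N : ℝ) - 2) * α / 4 * p)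
      * r ^ (-(((N : ℝ) - 2) * α * (p - 2) / 4)))) * e1
    + (|V| ^ p * w * (1 + α / 2)) * e2

/-- for `1 ≤ p < ∞` and smooth compactly supported `v` on `Ω_Ψ`,
`((2+α)/2)^{1−p/2} ∫_Ω |Jv(x)|^p |x|^{−(N−2)α(p−2)/4} a(x) dx = ∫_{Ω_Ψ} |v(y)|^p m̃(y) dy`,
where `Jv(x) = √((2+α)/2) |x|^{(N−2)α/4} v(Ψ(x))`. -/
theorem stmt_4 (N : ℕ) (hN : 2 ≤ N) (α : ℝ) (hα : 0 < α)
    (Ω : Set (EuclideanSpace ℝ (Fin N))) (hΩ : IsOpen Ω)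
    (h0 : (0 : EuclideanSpace ℝ (Fin N)) ∉ closure Ω)
    (a : EuclideanSpace ℝ (Fin N) → ℝ) (ha : ContinuousOn a (closure Ω))
    (a₁ a₂ : ℝ) (ha₁ : 0 < a₁) (ha₁₂ : a₁ ≤ a₂)
    (hbound : ∀ x ∈ closure Ω, a₁ * ‖x‖ ^ α ≤ a x ∧ a x ≤ a₂ * ‖x‖ ^ α)
    (Ψ Ψinv : EuclideanSpace ℝ (Fin N) → EuclideanSpace ℝ (Fin N))
    (hΨ : ∀ x, Ψ x = ‖x‖ ^ (α / 2) • x)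
    (hΨinv : ∀ y, Ψinv y = ‖y‖ ^ (-α / (2 + α)) • y)
    (ΩΨ : Set (EuclideanSpace ℝ (Fin N))) (hΩΨ : ΩΨ = {y | Ψinv y ∈ Ω})
    (m : EuclideanSpace ℝ (Fin N) → ℝ)
    (hm : ∀ y, m y = ‖Ψinv y‖ ^ (-α) * a (Ψinv y))
    (J : (EuclideanSpace ℝ (Fin N) → ℝ) → EuclideanSpace ℝ (Fin N) → ℝ)
    (hJ : ∀ (w : EuclideanSpace ℝ (Fin N) → ℝ) (x),
      J w x = Real.sqrt ((2 + α) / 2) * ‖x‖ ^ (((N : ℝ) - 2) * α / 4) * w (Ψ x))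
    (p : ℝ) (hp : 1 ≤ p)
    (v : EuclideanSpace ℝ (Fin N) → ℝ)
    (hv : ContDiff ℝ (⊤ : ℕ∞) v) (hvsupp : HasCompactSupport v) (hsub : tsupport v ⊆ ΩΨ) :
    ((2 + α) / 2) ^ (1 - p / 2)
        * ∫ x in Ω, |J v x| ^ p * ‖x‖ ^ (-(((N : ℝ) - 2) * α * (p - 2) / 4)) * a x
      = ∫ y in ΩΨ, |v y| ^ p * m y := by
  have h2α : (0 : ℝ) < 2 + α := by linarith
  have hΩ0 : ∀ x ∈ Ω, x ≠ (0 : EuclideanSpace ℝ (Fin N)) := by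
    intro x hx hx0
    exact h0 (hx0 ▸ subset_closure hx)
  have hΨnorm : ∀ x : EuclideanSpace ℝ (Fin N), ‖Ψ x‖ = ‖x‖ ^ ((2 + α) / 2) := by
    intro x
    by_cases hx : x = 0
    · subst hx
      rw [hΨ, smul_zero, norm_zero, Real.zero_rpow (by positivity)]
    · have hr : (0 : ℝ) < ‖x‖ := norm_pos_iff.mpr hx
      rw [hΨ, norm_smul, Real.norm_eq_abs,
        abs_of_nonneg (Real.rpow_nonneg (norm_nonneg x) _)]
      nth_rewrite 2 [← Real.rpow_one ‖x‖]
      rw [← Real.rpow_add hr]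
      congr 1; ring
  have hΨinvΨ : ∀ x, Ψinv (Ψ x) = x := by
    intro x
    by_cases hx : x = 0
    · subst hx; rw [hΨ, smul_zero, hΨinv, smul_zero]
    · have hr : (0 : ℝ) < ‖x‖ := norm_pos_iff.mpr hx
      rw [hΨinv, hΨnorm x, hΨ, smul_smul, ← Real.rpow_mul (norm_nonneg x),
        ← Real.rpow_add hr,
        show (2 + α) / 2 * (-α / (2 + α)) + α / 2 = 0 by field_simp; ring,
        Real.rpow_zero, one_smul]
  have hΨinvnorm : ∀ y : EuclideanSpace ℝ (Fin N), ‖Ψinv y‖ = ‖y‖ ^ (2 / (2 + α)) := by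
    intro y
    by_cases hy : y = 0
    · subst hy
      rw [hΨinv, smul_zero, norm_zero, Real.zero_rpow (by positivity)]
    · have hr : (0 : ℝ) < ‖y‖ := norm_pos_iff.mpr hy
      rw [hΨinv, norm_smul, Real.norm_eq_abs,
        abs_of_nonneg (Real.rpow_nonneg (norm_nonneg y) _)]
      nth_rewrite 2 [← Real.rpow_one ‖y‖]
      rw [← Real.rpow_add hr]
      congr 1; field_simp; ring
  have hΨΨinv : ∀ y, Ψ (Ψinv y) = y := by
    intro y
    by_cases hy : y = 0
    · subst hy; rw [hΨinv, smul_zero, hΨ, smul_zero]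
    · have hr : (0 : ℝ) < ‖y‖ := norm_pos_iff.mpr hy
      rw [hΨ, hΨinvnorm y, hΨinv, smul_smul, ← Real.rpow_mul (norm_nonneg y),
        ← Real.rpow_add hr,
        show 2 / (2 + α) * (α / 2) + -α / (2 + α) = 0 by field_simp; ring,
        Real.rpow_zero, one_smul]
  have himg : Ψ '' Ω = ΩΨ := by
    rw [hΩΨ]; ext y
    constructor
    · rintro ⟨x, hxΩ, rfl⟩
      simpa [Set.mem_setOf_eq, hΨinvΨ x] using hxΩ
    · intro hy
      exact ⟨Ψinv y, hy, hΨΨinv y⟩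
  have hinj : Set.InjOn Ψ Ω :=
    ((show Function.LeftInverse Ψinv Ψ from hΨinvΨ).injective).injOn
  have hΨfun : Ψ = fun y : EuclideanSpace ℝ (Fin N) => ‖y‖ ^ (α / 2) • y := funext hΨ
  have hfd : ∀ x ∈ Ω, HasFDerivWithinAt Ψ (stmt4D α x) Ω x := by
    intro x hx
    rw [hΨfun]
    exact (stmt4_hasFDerivAt α x (hΩ0 x hx)).hasFDerivWithinAt
  have key := integral_image_eq_integral_abs_det_fderiv_smul volume hΩ.measurableSet hfd hinj
    (fun y => |v y| ^ p * m y)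
  rw [himg] at key
  rw [key, ← integral_const_mul]
  refine setIntegral_congr_fun hΩ.measurableSet fun x hx => ?_
  have hx0 := hΩ0 x hx
  have hr : (0 : ℝ) < ‖x‖ := norm_pos_iff.mpr hx0
  simp only [smul_eq_mul]
  rw [hJ, hm, hΨinvΨ x, stmt4_det α x hx0,
    abs_of_pos (by positivity : (0 : ℝ) < (1 + α / 2) * (‖x‖ ^ (α / 2)) ^ N)]
  exact stmt4_scalar N α p ‖x‖ (v (Ψ x)) (a x) hα hr
end

section
/- Let N ≥ 3 and α > 0, and define ψ₀(y) = |y|^{−(N−2)α/(2(2+α))} ( 1 − |y|^{−2(N−2)/(2+α)} ) for |y| ≥ 1 (this is the stationary solution of Remark 2.6; the paper's displayed exponents contain a typo). Then: (a) for every y with |y| > 1, div( b(y) ∇ψ₀(y) ) + ((N−2)²α(4+α)/16) |y|^{−2} ψ₀(y) = 0; (b) with p_α = 2N(2+α)/(α(N−2)), for every ε > 0 one has ∫_{|y|>1} |ψ₀(y)|^{p_α+ε} dy < ∞, while ∫_{|y|>1} |ψ₀(y)|^{p_α} dy = ∞. -/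
/-!
Write `ψ₀ = |y|^a - |y|^d` with `a = -(N-2)α/(2(2+α))` and `d = a - 2(N-2)/(2+α)`.
Since `b(y) y = (1 + α(1+α/4)) y`, the flux `b ∇|y|^s` of a radial power is again radial and
`div (b ∇|y|^s) = K s (s+N-2) |y|^(s-2)` with `K = 1 + α(1+α/4) = (2+α)²/4`. The exponents `a`
and `d` are the two roots `-(N-2)/2 ± (N-2)/(2+α)` of the indicial equation
`K s (s+N-2) + (N-2)²α(4+α)/16 = 0`, which gives (a).
For (b), `|ψ₀|^r` is at most `|y|^(a r)` on `|y| > 1` and at least a multiple of it on `|y| > 2`;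
in polar coordinates `|y|^t` is integrable at infinity iff `t < -N`, and `a p_α = -N`.
-/

open MeasureTheory Set

section Divergence

variable {n : ℕ}

noncomputable def euclideanDiv (F : EuclideanSpace ℝ (Fin n) → EuclideanSpace ℝ (Fin n))
    (y : EuclideanSpace ℝ (Fin n)) : ℝ :=
  ∑ i, fderiv ℝ (fun z => F z i) y (EuclideanSpace.single i 1)

theorem Filter.EventuallyEq.euclideanDiv_eq
    {F G : EuclideanSpace ℝ (Fin n) → EuclideanSpace ℝ (Fin n)} {y : EuclideanSpace ℝ (Fin n)}
    (h : F =ᶠ[nhds y] G) : euclideanDiv F y = euclideanDiv G y := by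
  refine Finset.sum_congr rfl fun i _ => ?_
  rw [Filter.EventuallyEq.fderiv_eq (h.mono fun z (hz : F z = G z) => congrArg (· i) hz)]

theorem sum_mul_apply_single (L : EuclideanSpace ℝ (Fin n) →L[ℝ] ℝ)
    (y : EuclideanSpace ℝ (Fin n)) : ∑ i, y i * L (EuclideanSpace.single i 1) = L y := by
  conv_rhs => rw [← (EuclideanSpace.basisFun (Fin n) ℝ).sum_repr y]
  simp [map_sum]

theorem euclideanDiv_smul_self {φ : EuclideanSpace ℝ (Fin n) → ℝ}
    {L : EuclideanSpace ℝ (Fin n) →L[ℝ] ℝ} {y : EuclideanSpace ℝ (Fin n)}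
    (hφ : HasFDerivAt φ L y) : euclideanDiv (fun z => φ z • z) y = L y + n * φ y := by
  have hcomp (i : Fin n) : fderiv ℝ (fun z => (φ z • z) i) y (EuclideanSpace.single i 1)
      = y i * L (EuclideanSpace.single i 1) + φ y := by
    have h : HasFDerivAt (fun z => (φ z • z) i) (φ y • EuclideanSpace.proj i + y i • L) y :=
      hφ.fun_mul (EuclideanSpace.proj (𝕜 := ℝ) i).hasFDerivAt
    rw [h.fderiv]
    simp [add_comm]
  rw [euclideanDiv, Finset.sum_congr rfl fun i _ => hcomp i, Finset.sum_add_distrib,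
    sum_mul_apply_single]
  simp

end Divergence

section RadialPowers

variable {E : Type*} [NormedAddCommGroup E] [InnerProductSpace ℝ E] {x : E}

theorem norm_rpow_sub_two_mul_inner_self (hx : x ≠ 0) (p : ℝ) :
    ‖x‖ ^ (p - 2) * inner ℝ x x = ‖x‖ ^ p := by
  rw [real_inner_self_eq_norm_sq, ← Real.rpow_natCast, ← Real.rpow_add (norm_pos_iff.2 hx)]
  norm_num

theorem hasFDerivAt_norm_rpow_of_ne_zero (hx : x ≠ 0) (p : ℝ) :
    HasFDerivAt (fun z : E => ‖z‖ ^ p) ((p * ‖x‖ ^ (p - 2)) • innerSL ℝ x) x := by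
  convert ((hasStrictFDerivAt_norm_sq x).rpow_const (p := p / 2) (by simp [hx])).hasFDerivAt
    using 1
  · ext z; simp [← Real.rpow_natCast_mul (norm_nonneg _)]; ring_nf
  · simp_rw [← Real.rpow_natCast_mul (norm_nonneg _), ← Nat.cast_smul_eq_nsmul ℝ, smul_smul]
    ring_nf

theorem gradient_norm_rpow_sub_norm_rpow [CompleteSpace E] (hx : x ≠ 0) (p q : ℝ) :
    gradient (fun z : E => ‖z‖ ^ p - ‖z‖ ^ q) x = (p * ‖x‖ ^ (p - 2) - q * ‖x‖ ^ (q - 2)) • x := by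
  refine HasGradientAt.gradient ?_
  rw [hasGradientAt_iff_hasFDerivAt]
  have h := (hasFDerivAt_norm_rpow_of_ne_zero hx p).fun_sub (hasFDerivAt_norm_rpow_of_ne_zero hx q)
  refine h.congr_fderiv ?_
  ext v
  simp [sub_mul]

theorem smul_add_inner_smul_div_norm_sq_smul (hx : x ≠ 0) (κ c : ℝ) :
    c • x + (κ * (inner ℝ x (c • x) / ‖x‖ ^ 2)) • x = ((1 + κ) * c) • x := by
  rw [real_inner_smul_right, real_inner_self_eq_norm_sq, ← add_smul]
  congr 1
  field_simp [norm_ne_zero_iff.2 hx]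

end RadialPowers

section RadialFlux

variable {n : ℕ}

theorem euclideanDiv_norm_rpow_sub_smul_self {y : EuclideanSpace ℝ (Fin n)} (hy : y ≠ 0)
    (K p q : ℝ) :
    euclideanDiv (fun z => (K * (p * ‖z‖ ^ (p - 2) - q * ‖z‖ ^ (q - 2))) • z) y
      = K * (p * (p + n - 2) * ‖y‖ ^ (p - 2) - q * (q + n - 2) * ‖y‖ ^ (q - 2)) := by
  have hφ := (((hasFDerivAt_norm_rpow_of_ne_zero hy (p - 2)).const_mul p).fun_sub
    ((hasFDerivAt_norm_rpow_of_ne_zero hy (q - 2)).const_mul q)).const_mul K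
  rw [euclideanDiv_smul_self hφ]
  simp only [smul_apply, sub_apply, innerSL_apply_apply, smul_eq_mul, mul_assoc,
    norm_rpow_sub_two_mul_inner_self hy]
  ring

theorem euclideanDiv_flux_norm_rpow_sub_add_eq_zero {κ c p q : ℝ}
    (hp : (1 + κ) * p * (p + n - 2) + c = 0) (hq : (1 + κ) * q * (q + n - 2) + c = 0)
    {b : EuclideanSpace ℝ (Fin n) → EuclideanSpace ℝ (Fin n) → EuclideanSpace ℝ (Fin n)}
    (hb : ∀ y ξ, b y ξ = ξ + (κ * (inner ℝ y ξ / ‖y‖ ^ 2)) • y)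
    {y : EuclideanSpace ℝ (Fin n)} (hy : y ≠ 0) :
    euclideanDiv (fun z => b z (gradient (fun z => ‖z‖ ^ p - ‖z‖ ^ q) z)) y
      + c * (‖y‖ ^ (-2 : ℝ) * (‖y‖ ^ p - ‖y‖ ^ q)) = 0 := by
  have hflux : (fun z => b z (gradient (fun z => ‖z‖ ^ p - ‖z‖ ^ q) z)) =ᶠ[nhds y]
      fun z => ((1 + κ) * (p * ‖z‖ ^ (p - 2) - q * ‖z‖ ^ (q - 2))) • z := by
    filter_upwards [isOpen_ne.mem_nhds hy] with z hz
    rw [hb, gradient_norm_rpow_sub_norm_rpow hz, smul_add_inner_smul_div_norm_sq_smul hz]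
  have hy' := norm_pos_iff.2 hy
  rw [hflux.euclideanDiv_eq, euclideanDiv_norm_rpow_sub_smul_self hy,
    mul_sub (‖y‖ ^ (-2 : ℝ)), ← Real.rpow_add hy', ← Real.rpow_add hy',
    show -2 + p = p - 2 by ring, show -2 + q = q - 2 by ring]
  linear_combination ‖y‖ ^ (p - 2) * hp - ‖y‖ ^ (q - 2) * hq

end RadialFlux

theorem indicial_eq_zero {n α s : ℝ} (hα : 2 + α ≠ 0)
    (hs : (s + (n - 2) / 2) ^ 2 = ((n - 2) / (2 + α)) ^ 2) :
    (1 + α * (1 + α / 4)) * s * (s + n - 2) + (n - 2) ^ 2 * α * (4 + α) / 16 = 0 := by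
  field_simp at hs
  linear_combination hs / 16

theorem rpow_mul_one_sub_rpow {x a c : ℝ} (hx : 0 ≤ x) (ha : a ≠ 0) (hac : a + c ≠ 0) :
    x ^ a * (1 - x ^ c) = x ^ a - x ^ (a + c) := by
  rcases hx.eq_or_lt with rfl | hx
  · simp [Real.zero_rpow ha, Real.zero_rpow hac]
  · rw [mul_sub, mul_one, Real.rpow_add hx]

theorem abs_rpow_mul_one_sub_rpow_rpow {x a c r : ℝ} (hx : 1 ≤ x) (hc : c ≤ 0) :
    |x ^ a * (1 - x ^ c)| ^ r = x ^ (a * r) * (1 - x ^ c) ^ r := by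
  have hx0 : 0 ≤ x := zero_le_one.trans hx
  have h1 : 0 ≤ 1 - x ^ c := sub_nonneg.2 (Real.rpow_le_one_of_one_le_of_nonpos hx hc)
  rw [abs_of_nonneg (mul_nonneg (Real.rpow_nonneg hx0 a) h1),
    Real.mul_rpow (Real.rpow_nonneg hx0 a) h1, ← Real.rpow_mul hx0]

section PolarIntegrability

variable {E : Type*} [NormedAddCommGroup E] [NormedSpace ℝ E] [Nontrivial E]
  [FiniteDimensional ℝ E] [MeasurableSpace E] [BorelSpace E] (μ : Measure E) [μ.IsAddHaarMeasure]

theorem integrableOn_norm_rpow_setOf_lt_norm_iff {R s : ℝ} (hR : 0 < R) :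
    IntegrableOn (fun x : E => ‖x‖ ^ s) {x | R < ‖x‖} μ ↔ s < -(Module.finrank ℝ E : ℝ) := by
  set d := Module.finrank ℝ E
  have hd : ((d - 1 : ℕ) : ℝ) = d - 1 := by
    rw [Nat.cast_sub Module.finrank_pos, Nat.cast_one]
  have hS : {x : E | R < ‖x‖}.indicator (fun x => ‖x‖ ^ s)
      = fun x => (Ioi R).indicator (fun r : ℝ => r ^ s) ‖x‖ := by
    ext x; by_cases hx : R < ‖x‖ <;> simp [hx]
  have hI : (fun r : ℝ => r ^ (d - 1) • (Ioi R).indicator (fun r : ℝ => r ^ s) r)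
      = (Ioi R).indicator (fun r : ℝ => r ^ (d - 1) * r ^ s) := by
    ext r; by_cases hr : R < r <;> simp [hr]
  have hpow : EqOn (fun r : ℝ => r ^ (d - 1) * r ^ s) (fun r => r ^ (s + (d - 1))) (Ioi R) :=
    fun r (hr : R < r) => by
      simp only [← Real.rpow_natCast, ← Real.rpow_add (hR.trans hr), hd, add_comm]
  rw [← integrable_indicator_iff (measurableSet_lt measurable_const measurable_norm), hS,
    integrable_fun_norm_addHaar μ, hI,
    integrableOn_iff_integrable_of_support_subset
      ((support_indicator_subset).trans (Ioi_subset_Ioi hR.le)),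
    integrable_indicator_iff measurableSet_Ioi,
    integrableOn_congr_fun hpow measurableSet_Ioi, integrableOn_Ioi_rpow_iff hR]
  constructor <;> intro h <;> linarith

theorem integrableOn_abs_norm_rpow_mul_one_sub_rpow_iff {a c r : ℝ} (hc : c < 0) (hr : 0 ≤ r) :
    IntegrableOn (fun x : E => |‖x‖ ^ a * (1 - ‖x‖ ^ c)| ^ r) {x | 1 < ‖x‖} μ
      ↔ a * r < -(Module.finrank ℝ E : ℝ) := by
  constructor
  · intro h
    set C := (1 - (2 : ℝ) ^ c) ^ r
    have hC : 0 < C :=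
      Real.rpow_pos_of_pos (sub_pos.2 (Real.rpow_lt_one_of_one_lt_of_neg one_lt_two hc)) r
    rw [← integrableOn_norm_rpow_setOf_lt_norm_iff μ two_pos]
    refine ((h.mono_set fun x (hx : 2 < ‖x‖) => one_lt_two.trans hx).const_mul C⁻¹).mono'
      (by fun_prop : Measurable fun x : E => ‖x‖ ^ (a * r)).aestronglyMeasurable
      (ae_restrict_of_forall_mem (measurableSet_lt measurable_const measurable_norm)
        fun x (hx : 2 < ‖x‖) => ?_)
    have hx1 : 1 ≤ ‖x‖ := one_le_two.trans hx.le
    have hlow : C ≤ (1 - ‖x‖ ^ c) ^ r :=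
      Real.rpow_le_rpow (sub_nonneg.2 (Real.rpow_le_one_of_one_le_of_nonpos one_le_two hc.le))
        (sub_le_sub_left (Real.rpow_le_rpow_of_nonpos two_pos hx.le hc.le) 1) hr
    rw [abs_rpow_mul_one_sub_rpow_rpow hx1 hc.le,
      Real.norm_of_nonneg (Real.rpow_nonneg (norm_nonneg x) _), le_inv_mul_iff₀ hC, mul_comm C]
    exact mul_le_mul_of_nonneg_left hlow (Real.rpow_nonneg (norm_nonneg x) _)
  · intro h
    refine ((integrableOn_norm_rpow_setOf_lt_norm_iff μ one_pos).2 h).mono'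
      (by fun_prop : Measurable fun x : E => |‖x‖ ^ a * (1 - ‖x‖ ^ c)| ^ r).aestronglyMeasurable
      (ae_restrict_of_forall_mem (measurableSet_lt measurable_const measurable_norm)
        fun x (hx : 1 < ‖x‖) => ?_)
    rw [Real.norm_of_nonneg (Real.rpow_nonneg (abs_nonneg _) _),
      abs_rpow_mul_one_sub_rpow_rpow hx.le hc.le]
    refine mul_le_of_le_one_right (Real.rpow_nonneg (norm_nonneg x) _)
      (Real.rpow_le_one (sub_nonneg.2 ?_) (sub_le_self _ ?_) hr)
    · exact Real.rpow_le_one_of_one_le_of_nonpos hx.le hc.le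
    · exact Real.rpow_nonneg (norm_nonneg x) _

end PolarIntegrability

/-- for `N ≥ 3`, `α > 0`, the stationary solution
`ψ₀(y) = |y|^{−(N−2)α/(2(2+α))} (1 − |y|^{−2(N−2)/(2+α)})` satisfies
(a) `div(b(y)∇ψ₀) + ((N−2)²α(4+α)/16)|y|⁻² ψ₀ = 0` for `|y| > 1`, and
(b) with `p_α = 2N(2+α)/(α(N−2))`, `ψ₀ ∈ L^{p_α+ε}({|y|>1})` for every `ε > 0` but
`ψ₀ ∉ L^{p_α}({|y|>1})`. -/
theorem stmt_7 (N : ℕ) (hN : 3 ≤ N) (α : ℝ) (hα : 0 < α)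
    (ψ : EuclideanSpace ℝ (Fin N) → ℝ)
    (hψ : ∀ y, ψ y = ‖y‖ ^ (-(((N : ℝ) - 2) * α / (2 * (2 + α))))
        * (1 - ‖y‖ ^ (-(2 * ((N : ℝ) - 2) / (2 + α)))))
    (b : EuclideanSpace ℝ (Fin N) → EuclideanSpace ℝ (Fin N) → EuclideanSpace ℝ (Fin N))
    (hb : ∀ y ξ, b y ξ = ξ + (α * (1 + α / 4) * ((inner ℝ y ξ : ℝ) / ‖y‖ ^ 2)) • y)
    (pα : ℝ) (hpα : pα = 2 * N * (2 + α) / (α * ((N : ℝ) - 2))) :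
    (∀ y : EuclideanSpace ℝ (Fin N), 1 < ‖y‖ →
      (∑ i : Fin N,
          fderiv ℝ (fun z => (b z (gradient ψ z)) i) y (EuclideanSpace.single i 1))
        + ((N : ℝ) - 2) ^ 2 * α * (4 + α) / 16 * (‖y‖ ^ (-(2 : ℝ)) * ψ y) = 0)
    ∧ (∀ ε > (0 : ℝ),
        IntegrableOn (fun y : EuclideanSpace ℝ (Fin N) => |ψ y| ^ (pα + ε))
          {y : EuclideanSpace ℝ (Fin N) | 1 < ‖y‖})
    ∧ ¬ IntegrableOn (fun y : EuclideanSpace ℝ (Fin N) => |ψ y| ^ pα)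
          {y : EuclideanSpace ℝ (Fin N) | 1 < ‖y‖} := by
  have hN2 : (0 : ℝ) < N - 2 := by
    have : (3 : ℝ) ≤ N := by exact_mod_cast hN
    linarith
  set a := -(((N : ℝ) - 2) * α / (2 * (2 + α))) with ha
  set c := -(2 * ((N : ℝ) - 2) / (2 + α)) with hc
  have ha0 : a < 0 := neg_neg_of_pos (by positivity)
  have hc0 : c < 0 := neg_neg_of_pos (by positivity)
  have hapα : a * pα = -N := by
    rw [ha, hpα]
    field_simp
  have hp : 0 < pα := by
    rw [hpα]
    positivity
  have : Nonempty (Fin N) := ⟨⟨0, by omega⟩⟩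
  refine ⟨fun y hy => ?_, fun ε hε => ?_, ?_⟩
  · have hψ' : ψ = fun y => ‖y‖ ^ a - ‖y‖ ^ (a + c) :=
      funext fun y => (hψ y).trans (rpow_mul_one_sub_rpow (norm_nonneg y) ha0.ne (by linarith))
    rw [hψ']
    refine euclideanDiv_flux_norm_rpow_sub_add_eq_zero (indicial_eq_zero (by positivity) ?_)
      (indicial_eq_zero (by positivity) ?_) hb (norm_pos_iff.1 (one_pos.trans hy))
    · rw [ha]; field_simp; ring
    · rw [ha, hc]; field_simp; ring
  · simp only [hψ]
    rw [integrableOn_abs_norm_rpow_mul_one_sub_rpow_iff volume hc0 (by linarith),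
      finrank_euclideanSpace_fin, mul_add, hapα]
    linarith [mul_neg_of_neg_of_pos ha0 hε]
  · simp only [hψ]
    rw [integrableOn_abs_norm_rpow_mul_one_sub_rpow_iff volume hc0 hp.le,
      finrank_euclideanSpace_fin, hapα]
    exact lt_irrefl _
end

section
/- Let Ω ⊆ ℝ^N be open, let Φ ∈ C²(ℝ^N) with Φ > 0 everywhere, and let u ∈ C¹(ℝ^N) be real-valued, compactly supported, and vanish on ℝ^N∖Ω. Then ∫_Ω Φ |∇u|² dx − ∫_Ω Φ^{−1} |∇(Φu)|² dx = ∫_Ω ( ΔΦ − |∇Φ|²/Φ ) u² dx; in particular ∫_Ω ( ΔΦ − |∇Φ|²/Φ ) u² dx ≤ ∫_Ω Φ |∇u|² dx. Consequently, if in addition a : Ω → ℝ, ε ∈ (0,1), h > 0, t ≥ 0, A ∈ C²(ℝ^N) satisfies ΔA(x) ≥ (1−ε) a(x) for all x ∈ Ω, and Φ(x) = exp( A(x) / ((h+2ε)(1+t)) ), then ((1−ε)/((h+2ε)(1+t))) ∫_Ω a(x) u² Φ dx ≤ ∫_Ω |∇u|² Φ dx. -/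
open MeasureTheory

noncomputable section

/-- The Laplacian `Δφ = ∑ᵢ ∂²φ/∂xᵢ²`. -/
def lap {N : ℕ} (φ : EuclideanSpace ℝ (Fin N) → ℝ) (x : EuclideanSpace ℝ (Fin N)) : ℝ :=
  ∑ i : Fin N, fderiv ℝ (fun z => fderiv ℝ φ z (EuclideanSpace.single i 1)) x
    (EuclideanSpace.single i 1)

/-!
Expanding `∇(Φu) = Φ ∇u + u ∇Φ` gives, pointwise,
`Φ |∇u|² - Φ⁻¹ |∇(Φu)|² = -(|∇Φ|²/Φ) u² - ⟪∇(u²), ∇Φ⟫`,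
and Green's identity `∫ v ΔΦ = -∫ ⟪∇v, ∇Φ⟫` with `v = u²` turns the last term into `∫ u² ΔΦ`.
The subtracted integral is nonnegative, which gives the inequality. For `Φ = exp (A / c)` one has
`ΔΦ - |∇Φ|²/Φ = Φ ΔA / c`, so the lower bound on `ΔA` bounds the left-hand side from below.
Every integrand that matters vanishes wherever `u` does, so the integrals over `Ω` are integrals
over the whole space.
-/

open InnerProductSpace

theorem ContDiff.fderiv_apply_const {E F : Type*} [NormedAddCommGroup E] [NormedSpace ℝ E]
    [NormedAddCommGroup F] [NormedSpace ℝ F] {f : E → F} {m n : WithTop ℕ∞}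
    (hf : ContDiff ℝ n f) (hmn : m + 1 ≤ n) (v : E) : ContDiff ℝ m (fun x => fderiv ℝ f x v) :=
  (hf.fderiv_right hmn).clm_apply contDiff_const

theorem integral_mul_fderiv_eq_neg_integral_fderiv_mul_of_hasCompactSupport
    {E : Type*} [NormedAddCommGroup E] [NormedSpace ℝ E] [FiniteDimensional ℝ E]
    [MeasurableSpace E] [BorelSpace E] {μ : Measure E} [μ.IsAddHaarMeasure] {f g : E → ℝ}
    (hf : ContDiff ℝ 1 f) (hf' : HasCompactSupport f) (hg : ContDiff ℝ 1 g) (v : E) :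
    ∫ x, f x * fderiv ℝ g x v ∂μ = -∫ x, fderiv ℝ f x v * g x ∂μ := by
  have hfv := hf.fderiv_apply_const (m := 0) (by norm_num) v
  have hgv := hg.fderiv_apply_const (m := 0) (by norm_num) v
  refine integral_mul_fderiv_eq_neg_fderiv_mul_of_integrable ?_ ?_ ?_
    (fun x _ => hf.differentiable one_ne_zero x) (fun x _ => hg.differentiable one_ne_zero x)
  · exact (hfv.continuous.mul hg.continuous).integrable_of_hasCompactSupport
      ((hf'.fderiv (𝕜 := ℝ)).comp_left (g := fun L : E →L[ℝ] ℝ => L v) rfl).mul_right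
  · exact (hf.continuous.mul hgv.continuous).integrable_of_hasCompactSupport hf'.mul_right
  · exact (hf.continuous.mul hg.continuous).integrable_of_hasCompactSupport hf'.mul_right

section Gradient

variable {F : Type*} [NormedAddCommGroup F] [InnerProductSpace ℝ F] [CompleteSpace F]
  {f g : F → ℝ} {x : F}

theorem ContDiff.continuous_gradient (hf : ContDiff ℝ 1 f) : Continuous (gradient f) :=
  (toDual ℝ F).symm.continuous.comp (hf.continuous_fderiv one_ne_zero)

theorem HasCompactSupport.gradient (hf : HasCompactSupport f) : HasCompactSupport (gradient f) :=
  (hf.fderiv (𝕜 := ℝ)).comp_left (map_zero (toDual ℝ F).symm)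

theorem gradient_fun_mul (hf : DifferentiableAt ℝ f x) (hg : DifferentiableAt ℝ g x) :
    gradient (fun y => f y * g y) x = f x • gradient g x + g x • gradient f x := by
  simp only [gradient, fderiv_fun_mul hf hg, map_add, map_smulₛₗ, starRingEnd_apply, star_trivial]

theorem gradient_fun_exp (hf : DifferentiableAt ℝ f x) :
    gradient (fun y => Real.exp (f y)) x = Real.exp (f x) • gradient f x := by
  simp only [gradient, fderiv_exp hf, map_smulₛₗ, starRingEnd_apply, star_trivial]

theorem mul_norm_gradient_sq_sub_inv_mul_norm_gradient_mul_sq {Φ u : F → ℝ}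
    (hΦ : DifferentiableAt ℝ Φ x) (hu : DifferentiableAt ℝ u x) (hΦx : Φ x ≠ 0) :
    Φ x * ‖gradient u x‖ ^ 2 - (Φ x)⁻¹ * ‖gradient (fun y => Φ y * u y) x‖ ^ 2
      = -(‖gradient Φ x‖ ^ 2 / Φ x * u x ^ 2
          + 2 * u x * inner ℝ (gradient u x) (gradient Φ x)) := by
  rw [gradient_fun_mul hΦ hu, norm_add_sq_real, norm_smul, norm_smul, inner_smul_left,
    inner_smul_right]
  simp only [Real.norm_eq_abs, mul_pow, sq_abs, starRingEnd_apply, star_trivial]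
  field_simp
  ring

end Gradient

section Euclidean

variable {N : ℕ} {f g φ : EuclideanSpace ℝ (Fin N) → ℝ}

theorem gradient_apply (f : EuclideanSpace ℝ (Fin N) → ℝ) (x : EuclideanSpace ℝ (Fin N))
    (i : Fin N) : gradient f x i = fderiv ℝ f x (EuclideanSpace.single i 1) := by
  rw [← inner_gradient_left (𝕜 := ℝ), EuclideanSpace.inner_single_right]
  simp

theorem inner_gradient_eq_sum (f g : EuclideanSpace ℝ (Fin N) → ℝ)
    (x : EuclideanSpace ℝ (Fin N)) :
    inner ℝ (gradient f x) (gradient g x)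
      = ∑ i, fderiv ℝ f x (EuclideanSpace.single i 1)
          * fderiv ℝ g x (EuclideanSpace.single i 1) := by
  simp only [PiLp.inner_apply, gradient_apply, RCLike.inner_apply, conj_trivial, mul_comm]

theorem ContDiff.continuous_lap (hφ : ContDiff ℝ 2 φ) : Continuous (lap φ) :=
  continuous_finsetSum _ fun i _ =>
    ((hφ.fderiv_apply_const (m := 1) (by norm_num) _).fderiv_apply_const (m := 0)
      (by norm_num) _).continuous

theorem lap_fun_div_const (φ : EuclideanSpace ℝ (Fin N) → ℝ) (c : ℝ)
    (x : EuclideanSpace ℝ (Fin N)) :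
    lap (fun y => φ y / c) x = lap φ x / c := by
  have hdiv (ψ : EuclideanSpace ℝ (Fin N) → ℝ) (z v : EuclideanSpace ℝ (Fin N)) :
      fderiv ℝ (fun y => ψ y / c) z v = fderiv ℝ ψ z v / c := by
    rw [show (fun y => ψ y / c) = c⁻¹ • ψ by ext; simp [div_eq_inv_mul], fderiv_const_smul_field]
    simp [div_eq_inv_mul]
  simp only [lap, hdiv, Finset.sum_div]

theorem lap_fun_exp (hg : ContDiff ℝ 2 g) (x : EuclideanSpace ℝ (Fin N)) :
    lap (fun y => Real.exp (g y)) x = Real.exp (g x) * (lap g x + ‖gradient g x‖ ^ 2) := by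
  have hg1 : Differentiable ℝ g := hg.differentiable (by norm_num)
  have hexp (z v : EuclideanSpace ℝ (Fin N)) :
      fderiv ℝ (fun y => Real.exp (g y)) z v = Real.exp (g z) * fderiv ℝ g z v := by
    rw [fderiv_exp (hg1 z)]; rfl
  have hpartial (v : EuclideanSpace ℝ (Fin N)) :
      fderiv ℝ (fun z => Real.exp (g z) * fderiv ℝ g z v) x v
        = Real.exp (g x) * fderiv ℝ g x v * fderiv ℝ g x v
          + Real.exp (g x) * fderiv ℝ (fun z => fderiv ℝ g z v) x v := by
    rw [fderiv_fun_mul (hg1 x).exp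
      ((hg.fderiv_apply_const (m := 1) (by norm_num) v).differentiable one_ne_zero x),
      fderiv_exp (hg1 x)]
    simp only [add_apply, smul_apply, smul_eq_mul]
    ring
  simp only [lap, hexp, hpartial, ← real_inner_self_eq_norm_sq, inner_gradient_eq_sum,
    Finset.mul_sum, ← Finset.sum_add_distrib]
  exact Finset.sum_congr rfl fun i _ => by ring

theorem lap_fun_exp_sub_norm_gradient_sq_div
    (hg : ContDiff ℝ 2 g) (x : EuclideanSpace ℝ (Fin N)) :
    lap (fun y => Real.exp (g y)) x - ‖gradient (fun y => Real.exp (g y)) x‖ ^ 2 / Real.exp (g x)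
      = Real.exp (g x) * lap g x := by
  rw [lap_fun_exp hg, gradient_fun_exp (hg.differentiable (by norm_num) x), norm_smul,
    Real.norm_of_nonneg (Real.exp_pos _).le]
  field_simp
  ring

theorem integral_mul_lap_eq_neg_integral_inner_gradient (hf : ContDiff ℝ 1 f)
    (hf' : HasCompactSupport f) (hφ : ContDiff ℝ 2 φ) :
    ∫ x, f x * lap φ x = -∫ x, inner ℝ (gradient f x) (gradient φ x) := by
  set e : Fin N → EuclideanSpace ℝ (Fin N) := fun i => EuclideanSpace.single i 1
  have hφi (i : Fin N) : ContDiff ℝ 1 fun x => fderiv ℝ φ x (e i) :=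
    hφ.fderiv_apply_const (by norm_num) _
  have hfi (i : Fin N) : Continuous fun x => fderiv ℝ f x (e i) :=
    (hf.fderiv_apply_const (m := 0) (by norm_num) _).continuous
  have hint₁ (i : Fin N) :
      Integrable fun x => f x * fderiv ℝ (fun z => fderiv ℝ φ z (e i)) x (e i) :=
    (hf.continuous.mul ((hφi i).fderiv_apply_const (m := 0) (by norm_num) _).continuous
      ).integrable_of_hasCompactSupport hf'.mul_right
  have hint₂ (i : Fin N) : Integrable fun x => fderiv ℝ f x (e i) * fderiv ℝ φ x (e i) :=
    ((hfi i).mul (hφi i).continuous).integrable_of_hasCompactSupport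
      ((hf'.fderiv (𝕜 := ℝ)).comp_left (g := fun L : StrongDual ℝ _ => L (e i)) rfl).mul_right
  simp only [lap, inner_gradient_eq_sum, Finset.mul_sum]
  rw [integral_finsetSum _ fun i _ => hint₁ i, integral_finsetSum _ fun i _ => hint₂ i,
    ← Finset.sum_neg_distrib]
  exact Finset.sum_congr rfl fun i _ =>
    integral_mul_fderiv_eq_neg_integral_fderiv_mul_of_hasCompactSupport hf hf' (hφi i) _

end Euclidean

section GroundState

variable {N : ℕ} {Ω : Set (EuclideanSpace ℝ (Fin N))} {Φ u : EuclideanSpace ℝ (Fin N) → ℝ}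

theorem setIntegral_mul_norm_gradient_sq_sub_inv_mul_norm_gradient_mul_sq
    (hΦ : ContDiff ℝ 2 Φ) (hΦ0 : ∀ x, Φ x ≠ 0) (hu : ContDiff ℝ 1 u)
    (husupp : HasCompactSupport u) (huz : ∀ x ∉ Ω, u x = 0) :
    (∫ x in Ω, Φ x * ‖gradient u x‖ ^ 2)
        - (∫ x in Ω, (Φ x)⁻¹ * ‖gradient (fun y => Φ y * u y) x‖ ^ 2)
      = ∫ x in Ω, (lap Φ x - ‖gradient Φ x‖ ^ 2 / Φ x) * u x ^ 2 := by
  have hΦ1 : ContDiff ℝ 1 Φ := hΦ.of_le (by norm_num)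
  have hΦd : Differentiable ℝ Φ := hΦ1.differentiable one_ne_zero
  have hud : Differentiable ℝ u := hu.differentiable one_ne_zero
  have hgrad_sq (x) : gradient (fun y => u y * u y) x = (2 * u x) • gradient u x := by
    rw [gradient_fun_mul (hud x) (hud x), two_mul, add_smul]
  have hpoint (x) : Φ x * ‖gradient u x‖ ^ 2 - (Φ x)⁻¹ * ‖gradient (fun y => Φ y * u y) x‖ ^ 2
      = (lap Φ x - ‖gradient Φ x‖ ^ 2 / Φ x) * u x ^ 2
        - (u x * u x * lap Φ x + inner ℝ (gradient (fun y => u y * u y) x) (gradient Φ x)) := by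
    rw [mul_norm_gradient_sq_sub_inv_mul_norm_gradient_mul_sq (hΦd x) (hud x) (hΦ0 x), hgrad_sq,
      inner_smul_left]
    simp only [starRingEnd_apply, star_trivial]
    ring
  have hint₁ : Integrable fun x => Φ x * ‖gradient u x‖ ^ 2 :=
    (hΦ.continuous.mul (hu.continuous_gradient.norm.pow 2)).integrable_of_hasCompactSupport
      (husupp.gradient.mono fun x hx h0 => hx (by simp [h0]))
  have hint₂ : Integrable fun x => (Φ x)⁻¹ * ‖gradient (fun y => Φ y * u y) x‖ ^ 2 :=
    ((hΦ.continuous.inv₀ hΦ0).mul ((hΦ1.mul hu).continuous_gradient.norm.pow 2)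
      ).integrable_of_hasCompactSupport
      ((husupp.mul_left (f := Φ)).gradient.mono fun x hx h0 =>
        hx (by simp [show gradient (fun y => Φ y * u y) x = 0 from h0]))
  have hint₃ : Integrable fun x => (lap Φ x - ‖gradient Φ x‖ ^ 2 / Φ x) * u x ^ 2 :=
    ((hΦ.continuous_lap.sub ((hΦ1.continuous_gradient.norm.pow 2).div hΦ.continuous hΦ0)).mul
      (hu.continuous.pow 2)).integrable_of_hasCompactSupport
      (husupp.mono fun x hx h0 => hx (by simp [h0]))
  have hint₄ : Integrable fun x => u x * u x * lap Φ x :=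
    ((hu.continuous.mul hu.continuous).mul hΦ.continuous_lap).integrable_of_hasCompactSupport
      (husupp.mono fun x hx h0 => hx (by simp [h0]))
  have hint₅ : Integrable fun x => inner ℝ (gradient (fun y => u y * u y) x) (gradient Φ x) :=
    ((hu.mul hu).continuous_gradient.inner hΦ1.continuous_gradient).integrable_of_hasCompactSupport
      (husupp.mono fun x hx h0 => hx (by simp [hgrad_sq, h0]))
  calc (∫ x in Ω, Φ x * ‖gradient u x‖ ^ 2)
        - (∫ x in Ω, (Φ x)⁻¹ * ‖gradient (fun y => Φ y * u y) x‖ ^ 2)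
      = ∫ x in Ω, (lap Φ x - ‖gradient Φ x‖ ^ 2 / Φ x) * u x ^ 2
          - (u x * u x * lap Φ x + inner ℝ (gradient (fun y => u y * u y) x) (gradient Φ x)) := by
        rw [← integral_sub hint₁.integrableOn hint₂.integrableOn]
        simp only [hpoint]
    _ = ∫ x, (lap Φ x - ‖gradient Φ x‖ ^ 2 / Φ x) * u x ^ 2
          - (u x * u x * lap Φ x + inner ℝ (gradient (fun y => u y * u y) x) (gradient Φ x)) :=
        setIntegral_eq_integral_of_forall_compl_eq_zero fun x hx => by simp [huz x hx, hgrad_sq]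
    _ = ∫ x, (lap Φ x - ‖gradient Φ x‖ ^ 2 / Φ x) * u x ^ 2 := by
        rw [integral_sub hint₃ (hint₄.fun_add hint₅), integral_add hint₄ hint₅,
          integral_mul_lap_eq_neg_integral_inner_gradient (hu.mul hu)
            (husupp.mul_right (f' := u)) hΦ, neg_add_cancel, sub_zero]
    _ = ∫ x in Ω, (lap Φ x - ‖gradient Φ x‖ ^ 2 / Φ x) * u x ^ 2 :=
        (setIntegral_eq_integral_of_forall_compl_eq_zero fun x hx => by simp [huz x hx]).symm

theorem setIntegral_lap_sub_norm_gradient_sq_div_mul_sq_le (hΦ : ContDiff ℝ 2 Φ)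
    (hΦpos : ∀ x, 0 < Φ x) (hu : ContDiff ℝ 1 u) (husupp : HasCompactSupport u)
    (huz : ∀ x ∉ Ω, u x = 0) :
    ∫ x in Ω, (lap Φ x - ‖gradient Φ x‖ ^ 2 / Φ x) * u x ^ 2
      ≤ ∫ x in Ω, Φ x * ‖gradient u x‖ ^ 2 := by
  rw [← setIntegral_mul_norm_gradient_sq_sub_inv_mul_norm_gradient_mul_sq hΦ
    (fun x => (hΦpos x).ne') hu husupp huz]
  exact sub_le_self _
    (integral_nonneg fun x => mul_nonneg (inv_nonneg.2 (hΦpos x).le) (sq_nonneg _))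

theorem div_mul_setIntegral_le_setIntegral_norm_gradient_sq_mul {a A : EuclideanSpace ℝ (Fin N) → ℝ}
    {κ c : ℝ} (hc : 0 ≤ c) (hA : ContDiff ℝ 2 A) (hΦA : ∀ x, Φ x = Real.exp (A x / c))
    (hu : ContDiff ℝ 1 u) (husupp : HasCompactSupport u) (huz : ∀ x ∉ Ω, u x = 0)
    (ha : ∀ x ∈ Ω, κ * a x ≤ lap A x) :
    κ / c * ∫ x in Ω, a x * u x ^ 2 * Φ x ≤ ∫ x in Ω, ‖gradient u x‖ ^ 2 * Φ x := by
  obtain rfl : Φ = fun x => Real.exp (A x / c) := funext hΦA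
  have hAc : ContDiff ℝ 2 fun x => A x / c := hA.div_const c
  by_cases hint : IntegrableOn (fun x => a x * u x ^ 2 * Real.exp (A x / c)) Ω
  · have hF (x) : lap (fun y => Real.exp (A y / c)) x
          - ‖gradient (fun y => Real.exp (A y / c)) x‖ ^ 2 / Real.exp (A x / c)
        = Real.exp (A x / c) * (lap A x / c) := by
      rw [lap_fun_exp_sub_norm_gradient_sq_div hAc, lap_fun_div_const]
    have hF_int : Integrable fun x => Real.exp (A x / c) * (lap A x / c) * u x ^ 2 :=
      ((hAc.continuous.rexp.mul (hA.continuous_lap.div_const c)).mul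
        (hu.continuous.pow 2)).integrable_of_hasCompactSupport
        (husupp.mono fun x hx h0 => hx (by simp [h0]))
    calc κ / c * ∫ x in Ω, a x * u x ^ 2 * Real.exp (A x / c)
        ≤ ∫ x in Ω, Real.exp (A x / c) * (lap A x / c) * u x ^ 2 := by
          rw [← integral_const_mul]
          refine integral_mono (hint.const_mul _) hF_int.integrableOn fun x => ?_
          by_cases hx : x ∈ Ω
          · calc κ / c * (a x * u x ^ 2 * Real.exp (A x / c))
                = κ * a x * (u x ^ 2 * Real.exp (A x / c) / c) := by ring
              _ ≤ lap A x * (u x ^ 2 * Real.exp (A x / c) / c) :=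
                mul_le_mul_of_nonneg_right (ha x hx) (by positivity)
              _ = Real.exp (A x / c) * (lap A x / c) * u x ^ 2 := by ring
          · simp [huz x hx]
      _ ≤ ∫ x in Ω, Real.exp (A x / c) * ‖gradient u x‖ ^ 2 := by
          simpa only [hF] using setIntegral_lap_sub_norm_gradient_sq_div_mul_sq_le hAc.exp
            (fun x => Real.exp_pos _) hu husupp huz
      _ = ∫ x in Ω, ‖gradient u x‖ ^ 2 * Real.exp (A x / c) := by simp only [mul_comm]
  · rw [integral_undef hint, mul_zero]
    exact integral_nonneg fun x => by positivity

end GroundState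

theorem stmt_13_general (N : ℕ) (Ω : Set (EuclideanSpace ℝ (Fin N)))
    (Φ : EuclideanSpace ℝ (Fin N) → ℝ) (hΦ : ContDiff ℝ 2 Φ) (hΦpos : ∀ x, 0 < Φ x)
    (u : EuclideanSpace ℝ (Fin N) → ℝ) (hu : ContDiff ℝ 1 u)
    (husupp : HasCompactSupport u) (huz : ∀ x ∉ Ω, u x = 0) :
    ((∫ x in Ω, Φ x * ‖gradient u x‖ ^ 2)
        - (∫ x in Ω, (Φ x)⁻¹ * ‖gradient (fun y => Φ y * u y) x‖ ^ 2)
      = ∫ x in Ω, (lap Φ x - ‖gradient Φ x‖ ^ 2 / Φ x) * (u x) ^ 2)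
    ∧ ((∫ x in Ω, (lap Φ x - ‖gradient Φ x‖ ^ 2 / Φ x) * (u x) ^ 2)
        ≤ ∫ x in Ω, Φ x * ‖gradient u x‖ ^ 2)
    ∧ (∀ (a : EuclideanSpace ℝ (Fin N) → ℝ) (ε h t : ℝ)
        (A : EuclideanSpace ℝ (Fin N) → ℝ),
        ε ∈ Set.Ioo (0 : ℝ) 1 → 0 < h → 0 ≤ t → ContDiff ℝ 2 A →
        (∀ x ∈ Ω, (1 - ε) * a x ≤ lap A x) →
        (∀ x, Φ x = Real.exp (A x / ((h + 2 * ε) * (1 + t)))) →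
        ((1 - ε) / ((h + 2 * ε) * (1 + t))) * ∫ x in Ω, a x * (u x) ^ 2 * Φ x
          ≤ ∫ x in Ω, ‖gradient u x‖ ^ 2 * Φ x) := by
  refine ⟨setIntegral_mul_norm_gradient_sq_sub_inv_mul_norm_gradient_mul_sq hΦ
      (fun x => (hΦpos x).ne') hu husupp huz,
    setIntegral_lap_sub_norm_gradient_sq_div_mul_sq_le hΦ hΦpos hu husupp huz, ?_⟩
  intro a ε h t A hε hh ht hA ha hΦA
  have hc : 0 ≤ (h + 2 * ε) * (1 + t) := mul_nonneg (by linarith [hε.1]) (by linarith)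
  exact div_mul_setIntegral_le_setIntegral_norm_gradient_sq_mul hc hA hΦA hu husupp huz ha

/-- for `Φ ∈ C²` with `Φ > 0` and `u ∈ C¹` compactly supported vanishing
outside the open set `Ω`,
`∫_Ω Φ|∇u|² − ∫_Ω Φ⁻¹|∇(Φu)|² = ∫_Ω (ΔΦ − |∇Φ|²/Φ) u²`, in particular
`∫_Ω (ΔΦ − |∇Φ|²/Φ) u² ≤ ∫_Ω Φ|∇u|²`; consequently, if `ΔA ≥ (1−ε)a` on `Ω` and
`Φ = exp(A/((h+2ε)(1+t)))`, then the Hardy-type inequality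
`((1−ε)/((h+2ε)(1+t))) ∫_Ω a u² Φ ≤ ∫_Ω |∇u|² Φ` holds. -/
theorem stmt_13 (N : ℕ) (Ω : Set (EuclideanSpace ℝ (Fin N))) (hΩ : IsOpen Ω)
    (Φ : EuclideanSpace ℝ (Fin N) → ℝ) (hΦ : ContDiff ℝ 2 Φ) (hΦpos : ∀ x, 0 < Φ x)
    (u : EuclideanSpace ℝ (Fin N) → ℝ) (hu : ContDiff ℝ 1 u)
    (husupp : HasCompactSupport u) (huz : ∀ x ∉ Ω, u x = 0) :
    ((∫ x in Ω, Φ x * ‖gradient u x‖ ^ 2)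
        - (∫ x in Ω, (Φ x)⁻¹ * ‖gradient (fun y => Φ y * u y) x‖ ^ 2)
      = ∫ x in Ω, (lap Φ x - ‖gradient Φ x‖ ^ 2 / Φ x) * (u x) ^ 2)
    ∧ ((∫ x in Ω, (lap Φ x - ‖gradient Φ x‖ ^ 2 / Φ x) * (u x) ^ 2)
        ≤ ∫ x in Ω, Φ x * ‖gradient u x‖ ^ 2)
    ∧ (∀ (a : EuclideanSpace ℝ (Fin N) → ℝ) (ε h t : ℝ)
        (A : EuclideanSpace ℝ (Fin N) → ℝ),
        ε ∈ Set.Ioo (0 : ℝ) 1 → 0 < h → 0 ≤ t → ContDiff ℝ 2 A →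
        (∀ x ∈ Ω, (1 - ε) * a x ≤ lap A x) →
        (∀ x, Φ x = Real.exp (A x / ((h + 2 * ε) * (1 + t)))) →
        ((1 - ε) / ((h + 2 * ε) * (1 + t))) * ∫ x in Ω, a x * (u x) ^ 2 * Φ x
          ≤ ∫ x in Ω, ‖gradient u x‖ ^ 2 * Φ x) :=
  stmt_13_general N Ω Φ hΦ hΦpos u hu husupp huz
end
end

section
/- Let Ω ⊆ ℝ^N be an open set with smooth boundary, let a : closure(Ω) → ℝ be continuous with a ≥ 0, and let Φ ∈ C²(closure(Ω)×[0,∞)) satisfy Φ > 0 and ∂_t Φ < 0 everywhere. Let u ∈ C²(closure(Ω)×[0,∞)) be real-valued, solve u_tt − Δu + a(x) u_t = 0 on Ω×(0,∞) with u(x,t) = 0 for x ∈ ∂Ω, and suppose that for every T > 0 there is R > 0 with supp u(·,t) ⊆ B(0,R) for all t ∈ [0,T]. Then for every t > 0: d/dt [ ∫_Ω ( 2 u u_t + a(x) |u|² ) Φ dx ] = 2 ∫_Ω u u_t (∂_t Φ) dx + 2 ∫_Ω |u_t|² Φ dx − 2 ∫_Ω |∇u|² Φ dx + ∫_Ω (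 a(x) ∂_t Φ + ΔΦ ) |u|² dx, where ∇ and Δ act in the spatial variables only. -/
open MeasureTheory Set Metric InnerProductSpace

noncomputable section

/-- `Ω` has a smooth boundary: near every boundary point, `Ω` is the sublevel set of a
smooth local defining function with nonvanishing differential. -/
def HasSmoothBoundary {N : ℕ} (Ω : Set (EuclideanSpace ℝ (Fin N))) : Prop :=
  ∀ x ∈ frontier Ω, ∃ (U : Set (EuclideanSpace ℝ (Fin N)))
    (f : EuclideanSpace ℝ (Fin N) → ℝ),
    IsOpen U ∧ x ∈ U ∧ ContDiff ℝ (⊤ : ℕ∞) f ∧ fderiv ℝ f x ≠ 0 ∧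
      ∀ y ∈ U, (y ∈ Ω ↔ f y < 0)


lemma tendsto_zero_of_hcs {h : ℝ → ℝ} (hc : HasCompactSupport h) :
    Filter.Tendsto h Filter.atTop (nhds 0) := by
  obtain ⟨M, hM⟩ := hc.isBounded.subset_closedBall 0
  apply Filter.Tendsto.congr' _ tendsto_const_nhds
  filter_upwards [Filter.eventually_gt_atTop M] with x hx
  by_contra hne
  have : x ∈ tsupport h := subset_tsupport h (by simpa using Ne.symm hne)
  have := hM this
  simp [Real.closedBall_eq_Icc] at this
  linarith [this.2]

lemma tendsto_zero_of_hcs_bot {h : ℝ → ℝ} (hc : HasCompactSupport h) :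
    Filter.Tendsto h Filter.atBot (nhds 0) := by
  obtain ⟨M, hM⟩ := hc.isBounded.subset_closedBall 0
  apply Filter.Tendsto.congr' _ tendsto_const_nhds
  filter_upwards [Filter.eventually_lt_atBot (-M)] with x hx
  by_contra hne
  have : x ∈ tsupport h := subset_tsupport h (by simpa using Ne.symm hne)
  have := hM this
  simp [Real.closedBall_eq_Icc] at this
  linarith [this.1]

lemma one_dim {s : Set ℝ} (hs : IsOpen s) {h : ℝ → ℝ} (hh : ContDiff ℝ 1 h)
    (hc : HasCompactSupport h) (hfr : ∀ x ∈ frontier s, h x = 0) :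
    ∫ x in s, deriv h x = 0 := by
  have hdiff : Differentiable ℝ h := hh.differentiable one_ne_zero
  have hcd : Continuous (deriv h) := hh.continuous_deriv le_rfl
  have hint : Integrable (deriv h) := hcd.integrable_of_hasCompactSupport hc.deriv
  have hkey : ∀ x ∈ s, ∫ y in connectedComponentIn s x, deriv h y = 0 := by
    intro x hx
    set I := connectedComponentIn s x with hI
    have hIo : IsOpen I := hs.connectedComponentIn
    have hIx : x ∈ I := mem_connectedComponentIn hx
    have hIs : I ⊆ s := connectedComponentIn_subset s x
    have hIpc : IsPreconnected I := isPreconnected_connectedComponentIn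
    -- any closure point of I not in I is a frontier point of s, hence h vanishes there
    have hzero : ∀ c, c ∉ I → c ∈ closure I → h c = 0 := by
      intro c hcI hccl
      apply hfr
      rw [hs.frontier_eq]
      refine ⟨closure_mono hIs hccl, ?_⟩
      intro hcs
      obtain ⟨ε, hε, hball⟩ := Metric.isOpen_iff.mp hs c hcs
      have hne : (Metric.ball c ε ∩ I).Nonempty :=
        mem_closure_iff.mp hccl _ Metric.isOpen_ball (Metric.mem_ball_self hε)
      obtain ⟨z, hz1, hz2⟩ := hne
      have hun : IsPreconnected (Metric.ball c ε ∪ I) :=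
        (convex_ball c ε).isPreconnected.union z hz1 hz2 hIpc
      have hsub : Metric.ball c ε ∪ I ⊆ s := union_subset hball hIs
      have hss : Metric.ball c ε ∪ I ⊆ connectedComponentIn s z :=
        hun.subset_connectedComponentIn (Or.inr hz2) hsub
      have hIz : connectedComponentIn s z = I :=
        (connectedComponentIn_eq (show z ∈ connectedComponentIn s x from hz2)).symm
      exact hcI (hIz ▸ hss (Or.inl (Metric.mem_ball_self hε)))
    -- helper: an open set cannot contain a point that is its own lower/upper bound pattern
    have hopen_mem : ∀ c ∈ I, ∃ ε > (0:ℝ), Ioo (c - ε) (c + ε) ⊆ I := by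
      intro c hc'
      obtain ⟨ε, hε, hball⟩ := Metric.isOpen_iff.mp hIo c hc'
      exact ⟨ε, hε, by rw [← Real.ball_eq_Ioo]; exact hball⟩
    set a := sInf I with ha
    set b := sSup I with hb
    have hFTC : ∀ p q : ℝ, p < q → (∫ y in Ioo p q, deriv h y) = h q - h p := by
      intro p q hpq
      rw [← MeasureTheory.integral_Ioc_eq_integral_Ioo, ← intervalIntegral.integral_of_le hpq.le]
      exact intervalIntegral.integral_deriv_eq_sub (fun y _ => hdiff y)
        (hcd.intervalIntegrable p q)
    rcases hIpc.mem_intervals with hcase|hcase|hcase|hcase|hcase|hcase|hcase|hcase|hcase|hcase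
    · -- Icc : contradiction with openness
      exfalso
      have hab : a ≤ b := by
        by_contra hab
        rw [hcase, Icc_eq_empty hab] at hIx; exact hIx
      have haI : a ∈ I := by rw [hcase]; exact ⟨le_refl a, hab⟩
      obtain ⟨ε, hε, hsub⟩ := hopen_mem a haI
      have : a - ε/2 ∈ I := hsub ⟨by linarith, by linarith⟩
      rw [hcase] at this
      linarith [this.1]
    · -- Ico
      exfalso
      have haI : a ∈ I := by
        rw [hcase]; rw [hcase] at hIx; exact ⟨le_refl a, lt_of_le_of_lt hIx.1 hIx.2⟩
      obtain ⟨ε, hε, hsub⟩ := hopen_mem a haI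
      have : a - ε/2 ∈ I := hsub ⟨by linarith, by linarith⟩
      rw [hcase] at this
      linarith [this.1]
    · -- Ioc
      exfalso
      have hbI : b ∈ I := by
        rw [hcase]; rw [hcase] at hIx; exact ⟨lt_of_lt_of_le hIx.1 hIx.2, le_refl b⟩
      obtain ⟨ε, hε, hsub⟩ := hopen_mem b hbI
      have : b + ε/2 ∈ I := hsub ⟨by linarith, by linarith⟩
      rw [hcase] at this
      linarith [this.2]
    · -- Ioo
      have hab : a < b := by rw [hcase] at hIx; exact lt_trans hIx.1 hIx.2
      have hha : h a = 0 := by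
        apply hzero a (by rw [hcase]; simp [ha]) 
        rw [hcase, closure_Ioo hab.ne]; exact ⟨le_refl a, hab.le⟩
      have hhb : h b = 0 := by
        apply hzero b (by rw [hcase]; simp [hb])
        rw [hcase, closure_Ioo hab.ne]; exact ⟨hab.le, le_refl b⟩
      rw [hcase, hFTC a b hab, hha, hhb, sub_zero]
    · -- Ici
      exfalso
      have haI : a ∈ I := by rw [hcase]; exact le_refl a
      obtain ⟨ε, hε, hsub⟩ := hopen_mem a haI
      have : a - ε/2 ∈ I := hsub ⟨by linarith, by linarith⟩
      rw [hcase] at this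
      simp only [mem_Ici] at this
      linarith
    · -- Ioi
      have hha : h a = 0 := by
        apply hzero a (by rw [hcase]; simp [ha])
        rw [hcase, closure_Ioi]; exact le_refl a
      rw [hcase]
      rw [MeasureTheory.integral_Ioi_of_hasDerivAt_of_tendsto
        (hdiff.continuous.continuousWithinAt)
        (fun y _ => (hdiff y).hasDerivAt) hint.integrableOn (tendsto_zero_of_hcs hc)]
      rw [hha]; ring
    · -- Iic
      exfalso
      have hbI : b ∈ I := by rw [hcase]; exact le_refl b
      obtain ⟨ε, hε, hsub⟩ := hopen_mem b hbI
      have : b + ε/2 ∈ I := hsub ⟨by linarith, by linarith⟩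
      rw [hcase] at this
      simp only [mem_Iic] at this
      linarith
    · -- Iio
      have hhb : h b = 0 := by
        apply hzero b (by rw [hcase]; simp [hb])
        rw [hcase, closure_Iio]; exact le_refl b
      rw [hcase, ← MeasureTheory.integral_Iic_eq_integral_Iio]
      rw [MeasureTheory.integral_Iic_of_hasDerivAt_of_tendsto
        (hdiff.continuous.continuousWithinAt)
        (fun y _ => (hdiff y).hasDerivAt) hint.integrableOn (tendsto_zero_of_hcs_bot hc)]
      rw [hhb]; ring
    · -- univ
      rw [hcase, MeasureTheory.setIntegral_univ]
      rw [← MeasureTheory.integral_add_compl (measurableSet_Iic (a := (0:ℝ))) hint]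
      have h1 : ∫ y in Iic (0:ℝ), deriv h y = h 0 - 0 :=
        MeasureTheory.integral_Iic_of_hasDerivAt_of_tendsto
          (hdiff.continuous.continuousWithinAt)
          (fun y _ => (hdiff y).hasDerivAt) hint.integrableOn (tendsto_zero_of_hcs_bot hc)
      have h2 : ∫ y in (Iic (0:ℝ))ᶜ, deriv h y = 0 - h 0 := by
        rw [compl_Iic]
        exact MeasureTheory.integral_Ioi_of_hasDerivAt_of_tendsto
          (hdiff.continuous.continuousWithinAt)
          (fun y _ => (hdiff y).hasDerivAt) hint.integrableOn (tendsto_zero_of_hcs hc)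
      rw [h1, h2]; ring
    · -- empty
      rw [hcase]; simp
  -- decompose s into countably many components indexed by rationals
  classical
  set T : Set (Set ℝ) := (fun q : ℚ => connectedComponentIn s (q:ℝ)) '' {q : ℚ | (q:ℝ) ∈ s} with hT
  have hTc : T.Countable := (Set.to_countable _).image _
  have hTunion : ⋃₀ T = s := by
    apply Subset.antisymm
    · rintro y ⟨I, ⟨q, hq, rfl⟩, hy⟩
      exact connectedComponentIn_subset s _ hy
    · intro y hy
      have hIo : IsOpen (connectedComponentIn s y) := hs.connectedComponentIn
      have hIy : y ∈ connectedComponentIn s y := mem_connectedComponentIn hy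
      obtain ⟨ε, hε, hsub⟩ := Metric.isOpen_iff.mp hIo y hIy
      obtain ⟨q, hq⟩ := exists_rat_btwn (show y - ε < y + ε by linarith)
      have hqball : (q:ℝ) ∈ Metric.ball y ε := by
        rw [Real.ball_eq_Ioo]; exact ⟨hq.1, hq.2⟩
      have hqcomp : (q:ℝ) ∈ connectedComponentIn s y := hsub hqball
      have hqs : (q:ℝ) ∈ s := connectedComponentIn_subset s y hqcomp
      refine ⟨connectedComponentIn s (q:ℝ), ⟨q, hqs, rfl⟩, ?_⟩
      rw [← connectedComponentIn_eq hqcomp]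
      exact hIy
  haveI : Countable T := hTc.to_subtype
  have hmeas : ∀ I : T, MeasurableSet (I : Set ℝ) := by
    rintro ⟨I, ⟨q, hq, rfl⟩⟩
    exact hs.connectedComponentIn.measurableSet
  have hdisj : Pairwise (Function.onFun Disjoint (fun I : T => (I : Set ℝ))) := by
    rintro ⟨I, ⟨q, hq, rfl⟩⟩ ⟨J, ⟨r, hr, rfl⟩⟩ hne
    simp only [Function.onFun]
    rw [Set.disjoint_left]
    intro z hzI hzJ
    have h1 := connectedComponentIn_eq (show z ∈ connectedComponentIn s (q:ℝ) from hzI)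
    have h2 := connectedComponentIn_eq (show z ∈ connectedComponentIn s (r:ℝ) from hzJ)
    exact hne (Subtype.ext (by simp only []; rw [h1, h2]))
  have hU : ⋃ (I : T), (I : Set ℝ) = s := by rw [← hTunion, sUnion_eq_iUnion]
  rw [← hU, MeasureTheory.integral_iUnion hmeas hdisj (hint.integrableOn)]
  convert tsum_zero with I
  rcases I with ⟨I, ⟨q, hq, rfl⟩⟩
  exact hkey q hq


lemma abs_coord_le_norm {n : ℕ} (x : EuclideanSpace ℝ (Fin n)) (i : Fin n) : |x i| ≤ ‖x‖ := by
  rw [EuclideanSpace.norm_eq]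
  have h1 : |x i| = Real.sqrt (‖x i‖^2) := by
    rw [Real.sqrt_sq_eq_abs]; simp
  rw [h1]
  apply Real.sqrt_le_sqrt
  exact Finset.single_le_sum (f := fun j => ‖x j‖^2) (fun j _ => sq_nonneg _) (Finset.mem_univ i)

lemma key_slice {N : ℕ} {Ω : Set (EuclideanSpace ℝ (Fin N))} (hΩ : IsOpen Ω)
    {g : EuclideanSpace ℝ (Fin N) → ℝ} (hg : ContDiff ℝ 1 g) (hgc : HasCompactSupport g)
    (hg0 : ∀ x ∈ frontier Ω, g x = 0) (i : Fin N) :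
    ∫ x in Ω, fderiv ℝ g x (EuclideanSpace.single i 1) = 0 := by
  rcases N with _ | n
  · exact absurd i.2 (by simp)
  set v : EuclideanSpace ℝ (Fin (n+1)) := EuclideanSpace.single i 1 with hv
  -- measure preserving equivalence
  set e₁ := (MeasurableEquiv.toLp 2 (Fin (n+1) → ℝ)).symm with he₁
  set e₂ := MeasurableEquiv.piFinSuccAbove (fun _ : Fin (n+1) => ℝ) i with he₂
  set ψ : ℝ × (Fin n → ℝ) → EuclideanSpace ℝ (Fin (n+1)) :=
    fun p => e₁.symm (e₂.symm p) with hψ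
  have hψe : ψ = ⇑(e₂.symm.trans e₁.symm) := rfl
  have hmp : MeasurePreserving ψ volume volume := by
    rw [hψe]
    exact ((EuclideanSpace.volume_preserving_symm_measurableEquiv_toLp (Fin (n+1))).symm e₁).comp
      ((volume_preserving_piFinSuccAbove (fun _ : Fin (n+1) => ℝ) i).symm e₂)
  have hemb : MeasurableEmbedding ψ := by
    rw [hψe]; exact (e₂.symm.trans e₁.symm).measurableEmbedding
  -- affine structure in the first variable
  have haff : ∀ s : ℝ, ∀ y : Fin n → ℝ, ψ (s, y) = ψ (0, y) + s • v := by
    intro s y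
    ext j
    have h1 : ∀ s : ℝ, ψ (s, y) j = (Fin.insertNth i s y : Fin (n+1) → ℝ) j := fun _ => rfl
    simp only [h1, hv, PiLp.add_apply, PiLp.smul_apply, smul_eq_mul]
    rcases eq_or_ne j i with hj | hj
    · subst hj
      simp [Fin.insertNth_apply_same, EuclideanSpace.single_apply]
    · rcases Fin.exists_succAbove_eq hj with ⟨k, rfl⟩
      simp [Fin.insertNth_apply_succAbove, EuclideanSpace.single_apply,
        (Fin.succAbove_ne i k)]
  have hgdiff : Differentiable ℝ g := hg.differentiable one_ne_zero
  have hdg_cont : Continuous (fun x => fderiv ℝ g x v) :=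
    (hg.continuous_fderiv one_ne_zero).clm_apply continuous_const
  have hdg_supp : HasCompactSupport (fun x => fderiv ℝ g x v) :=
    HasCompactSupport.fderiv_apply (𝕜 := ℝ) hgc v
  have hdg_int : Integrable (fun x => fderiv ℝ g x v) :=
    hdg_cont.integrable_of_hasCompactSupport hdg_supp
  set S := ψ ⁻¹' Ω with hS
  have hSm : MeasurableSet S := hemb.measurable hΩ.measurableSet
  set G : ℝ × (Fin n → ℝ) → ℝ := fun p => fderiv ℝ g (ψ p) v with hG
  have step1 : ∫ x in Ω, fderiv ℝ g x v = ∫ p in S, G p :=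
    (hmp.setIntegral_preimage_emb hemb _ _).symm
  have hGint : IntegrableOn G S := ((hmp.integrable_comp_emb hemb).mpr hdg_int).integrableOn
  have hGind : Integrable (S.indicator G) := hGint.integrable_indicator hSm
  rw [step1, ← integral_indicator hSm]
  rw [show (volume : Measure (ℝ × (Fin n → ℝ))) = (volume : Measure ℝ).prod volume from
    rfl] at hGind ⊢
  rw [integral_prod_symm _ hGind]
  have hinner : ∀ y : Fin n → ℝ, (∫ s : ℝ, S.indicator G (s, y)) = 0 := by
    intro y
    set A : ℝ → EuclideanSpace ℝ (Fin (n+1)) := fun s => ψ (s, y) with hA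
    have hAeq : A = fun s => ψ (0, y) + s • v := funext fun s => haff s y
    have hAd : ∀ s, HasDerivAt A v s := by
      rw [hAeq]; intro s
      simpa using (((hasDerivAt_id s).smul_const v).const_add (ψ (0, y)))
    have hAc : Continuous A := by
      rw [hAeq]; exact continuous_const.add (continuous_id.smul continuous_const)
    set h0 : ℝ → ℝ := fun s => g (A s) with hh0
    set sy : Set ℝ := A ⁻¹' Ω with hsy
    have hsyo : IsOpen sy := hΩ.preimage hAc
    have hDder : ∀ s, HasDerivAt h0 (fderiv ℝ g (A s) v) s := fun s =>
      (hgdiff (A s)).hasFDerivAt.comp_hasDerivAt s (hAd s)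
    have hieq : ∀ s, S.indicator G (s, y) = sy.indicator (deriv h0) s := by
      intro s
      by_cases hs : (s, y) ∈ S
      · rw [Set.indicator_of_mem hs, Set.indicator_of_mem (show s ∈ sy from hs)]
        exact ((hDder s).deriv).symm
      · rw [Set.indicator_of_notMem hs, Set.indicator_of_notMem (show s ∉ sy from hs)]
    rw [show (fun s => S.indicator G (s, y)) = sy.indicator (deriv h0) from funext hieq]
    rw [integral_indicator hsyo.measurableSet]
    -- apply the one-dimensional lemma
    apply one_dim hsyo
    · exact hg.comp (by rw [hAeq]
                        exact contDiff_const.add (contDiff_id.smul contDiff_const))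
    · obtain ⟨M, hM⟩ := hgc.isBounded.subset_closedBall 0
      apply HasCompactSupport.intro (isCompact_Icc (a := -M) (b := M))
      intro s hs
      by_contra hne
      have hAs : A s ∈ tsupport g := subset_tsupport g (by simpa [hh0] using hne)
      have hnorm : ‖A s‖ ≤ M := by simpa using hM hAs
      have hcoord : (A s) i = s := by
        have : (A s) i = (Fin.insertNth i s y : Fin (n+1) → ℝ) i := rfl
        rw [this, Fin.insertNth_apply_same]
      have := abs_coord_le_norm (A s) i
      rw [hcoord] at this
      apply hs
      constructor <;> [linarith [neg_abs_le s]; linarith [le_abs_self s]]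
    · intro x hx
      rw [hsyo.frontier_eq] at hx
      apply hg0
      refine ⟨hAc.closure_preimage_subset Ω hx.1, fun hmem => hx.2 (show x ∈ sy from ?_)⟩
      exact (show A x ∈ Ω from interior_subset hmem)
  rw [show (fun y => ∫ s : ℝ, S.indicator G (s, y)) = fun _ => (0:ℝ) from funext hinner]
  simp


lemma green {N : ℕ} {Ω : Set (EuclideanSpace ℝ (Fin N))} (hΩ : IsOpen Ω)
    {Ψ w : EuclideanSpace ℝ (Fin N) → ℝ} (hΨ : ContDiff ℝ 2 Ψ) (hw : ContDiff ℝ 2 w)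
    (hwc : HasCompactSupport w)
    (hw0 : ∀ x ∈ frontier Ω, w x = 0) (hw1 : ∀ x ∈ frontier Ω, fderiv ℝ w x = 0) :
    ∫ x in Ω, (Ψ x * lap w x - w x * lap Ψ x) = 0 := by
  have h21 : ((1:WithTop ℕ∞) + 1 : WithTop ℕ∞) ≤ 2 := by norm_num
  have hΨd : Differentiable ℝ Ψ := hΨ.differentiable (by norm_num)
  have hwd : Differentiable ℝ w := hw.differentiable (by norm_num)
  have hΨ' : ContDiff ℝ 1 (fderiv ℝ Ψ) := hΨ.fderiv_right h21
  have hw' : ContDiff ℝ 1 (fderiv ℝ w) := hw.fderiv_right h21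
  set e : Fin N → EuclideanSpace ℝ (Fin N) := fun i => EuclideanSpace.single i 1 with he
  set g : Fin N → EuclideanSpace ℝ (Fin N) → ℝ := fun i x =>
    Ψ x * fderiv ℝ w x (e i) - w x * fderiv ℝ Ψ x (e i) with hg
  have hWc : ∀ i, ContDiff ℝ 1 (fun z => fderiv ℝ w z (e i)) := fun i =>
    (ContinuousLinearMap.apply ℝ ℝ (e i)).contDiff.comp hw'
  have hPc : ∀ i, ContDiff ℝ 1 (fun z => fderiv ℝ Ψ z (e i)) := fun i =>
    (ContinuousLinearMap.apply ℝ ℝ (e i)).contDiff.comp hΨ'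
  have hgc1 : ∀ i, ContDiff ℝ 1 (g i) := fun i =>
    ((hΨ.of_le (by norm_num)).mul (hWc i)).sub ((hw.of_le (by norm_num)).mul (hPc i))
  have hwzero : ∀ x ∉ tsupport w, w x = 0 ∧ fderiv ℝ w x = 0 := by
    intro x hx
    refine ⟨image_eq_zero_of_notMem_tsupport hx, ?_⟩
    have hev : w =ᶠ[nhds x] (fun _ => (0:ℝ)) := by
      filter_upwards [(isClosed_tsupport w).isOpen_compl.mem_nhds hx] with y hy
      exact image_eq_zero_of_notMem_tsupport hy
    rw [hev.fderiv_eq, fderiv_fun_const]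
    rfl
  have hgcs : ∀ i, HasCompactSupport (g i) := by
    intro i
    apply HasCompactSupport.intro hwc
    intro x hx
    obtain ⟨h1, h2⟩ := hwzero x hx
    simp [hg, h1, h2]
  -- pointwise derivative computation
  have hder : ∀ i x, fderiv ℝ (g i) x (e i)
      = Ψ x * fderiv ℝ (fun z => fderiv ℝ w z (e i)) x (e i)
        - w x * fderiv ℝ (fun z => fderiv ℝ Ψ z (e i)) x (e i) := by
    intro i x
    have hW : HasFDerivAt (fun z => fderiv ℝ w z (e i))
        (fderiv ℝ (fun z => fderiv ℝ w z (e i)) x) x :=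
      ((hWc i).differentiable one_ne_zero x).hasFDerivAt
    have hP : HasFDerivAt (fun z => fderiv ℝ Ψ z (e i))
        (fderiv ℝ (fun z => fderiv ℝ Ψ z (e i)) x) x :=
      ((hPc i).differentiable one_ne_zero x).hasFDerivAt
    have h1 : HasFDerivAt (fun z => Ψ z * fderiv ℝ w z (e i))
        (Ψ x • fderiv ℝ (fun z => fderiv ℝ w z (e i)) x
          + (fderiv ℝ w x (e i)) • fderiv ℝ Ψ x) x := (hΨd x).hasFDerivAt.mul hW
    have h2 : HasFDerivAt (fun z => w z * fderiv ℝ Ψ z (e i))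
        (w x • fderiv ℝ (fun z => fderiv ℝ Ψ z (e i)) x
          + (fderiv ℝ Ψ x (e i)) • fderiv ℝ w x) x := (hwd x).hasFDerivAt.mul hP
    have h3 := (show HasFDerivAt (fun z => Ψ z * fderiv ℝ w z (e i) - w z * fderiv ℝ Ψ z (e i)) _ x from h1.sub h2).fderiv
    rw [hg]
    simp only []
    rw [h3]
    simp only [ContinuousLinearMap.coe_sub', Pi.sub_apply, ContinuousLinearMap.add_apply,
      ContinuousLinearMap.coe_smul', Pi.smul_apply, smul_eq_mul]
    ring
  have hpt : ∀ x, Ψ x * lap w x - w x * lap Ψ x = ∑ i, fderiv ℝ (g i) x (e i) := by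
    intro x
    rw [lap, lap]
    calc Ψ x * (∑ i, fderiv ℝ (fun z => fderiv ℝ w z (EuclideanSpace.single i 1)) x
            (EuclideanSpace.single i 1))
          - w x * (∑ i, fderiv ℝ (fun z => fderiv ℝ Ψ z (EuclideanSpace.single i 1)) x
            (EuclideanSpace.single i 1))
        = ∑ i, (Ψ x * fderiv ℝ (fun z => fderiv ℝ w z (e i)) x (e i)
            - w x * fderiv ℝ (fun z => fderiv ℝ Ψ z (e i)) x (e i)) := by
          rw [Finset.mul_sum, Finset.mul_sum, ← Finset.sum_sub_distrib]
      _ = ∑ i, fderiv ℝ (g i) x (e i) := by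
          exact Finset.sum_congr rfl fun i _ => (hder i x).symm
  rw [show (fun x => Ψ x * lap w x - w x * lap Ψ x)
      = (fun x => ∑ i, fderiv ℝ (g i) x (e i)) from funext hpt]
  rw [MeasureTheory.integral_finset_sum]
  · exact Finset.sum_eq_zero fun i _ => key_slice hΩ (hgc1 i) (hgcs i)
      (fun x hx => by simp [hg, hw0 x hx, hw1 x hx]) i
  · intro i _
    have hcont : Continuous (fun x => fderiv ℝ (g i) x (e i)) :=
      ((hgc1 i).continuous_fderiv one_ne_zero).clm_apply continuous_const
    have hsupp : HasCompactSupport (fun x => fderiv ℝ (g i) x (e i)) :=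
      HasCompactSupport.fderiv_apply (𝕜 := ℝ) (hgcs i) (e i)
    exact (hcont.integrable_of_hasCompactSupport hsupp).integrableOn


lemma grad_norm_sq {N : ℕ} (f : EuclideanSpace ℝ (Fin N) → ℝ) (x : EuclideanSpace ℝ (Fin N)) :
    ‖gradient f x‖^2 = ∑ i : Fin N, (fderiv ℝ f x (EuclideanSpace.single i 1))^2 := by
  have hcoord : ∀ i, gradient f x i = fderiv ℝ f x (EuclideanSpace.single i 1) := by
    intro i
    have h1 : @inner ℝ _ _ (gradient f x) (EuclideanSpace.single i (1:ℝ))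
        = fderiv ℝ f x (EuclideanSpace.single i 1) := toDual_symm_apply
    rw [EuclideanSpace.inner_single_right] at h1
    simpa using h1
  rw [EuclideanSpace.norm_eq, Real.sq_sqrt (by positivity)]
  exact Finset.sum_congr rfl fun i _ => by rw [hcoord i]; simp [sq]

lemma lap_sq {N : ℕ} {f : EuclideanSpace ℝ (Fin N) → ℝ} (hf : ContDiff ℝ 2 f)
    (x : EuclideanSpace ℝ (Fin N)) :
    lap (fun y => f y ^ 2) x
      = 2 * f x * lap f x + 2 * ‖gradient f x‖^2 := by
  have h21 : ((1:WithTop ℕ∞) + 1 : WithTop ℕ∞) ≤ 2 := by norm_num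
  have hfd : Differentiable ℝ f := hf.differentiable (by norm_num)
  have hf' : ContDiff ℝ 1 (fderiv ℝ f) := hf.fderiv_right h21
  rw [grad_norm_sq]
  rw [lap, lap, Finset.mul_sum, Finset.mul_sum, ← Finset.sum_add_distrib]
  apply Finset.sum_congr rfl
  intro i _
  set v := EuclideanSpace.single i (1:ℝ) with hv
  -- first: fderiv of f^2
  have hsq : ∀ z, fderiv ℝ (fun y => f y ^ 2) z = (2 * f z) • fderiv ℝ f z := by
    intro z
    have h := (show HasFDerivAt (fun y => f y * f y) _ z from (hfd z).hasFDerivAt.mul (hfd z).hasFDerivAt).fderiv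
    have heq : (fun y => f y ^ 2) = fun y => f y * f y := by funext y; ring
    rw [heq, h]
    ext w
    simp only [ContinuousLinearMap.add_apply, ContinuousLinearMap.coe_smul', Pi.smul_apply,
      smul_eq_mul]
    ring
  have hWc : ContDiff ℝ 1 (fun z => fderiv ℝ f z v) :=
    (ContinuousLinearMap.apply ℝ ℝ v).contDiff.comp hf'
  have houter : (fun z => fderiv ℝ (fun y => f y ^ 2) z v) = fun z => 2 * f z * fderiv ℝ f z v := by
    funext z
    rw [hsq z]
    simp [smul_eq_mul]
  rw [show (fun z => fderiv ℝ (fun y => f y ^ 2) z v) = fun z => 2 * f z * fderiv ℝ f z v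
    from houter]
  -- now fderiv of z ↦ 2 f z * (fderiv f z v) at x applied to v
  have hW : HasFDerivAt (fun z => fderiv ℝ f z v)
      (fderiv ℝ (fun z => fderiv ℝ f z v) x) x :=
    ((hWc).differentiable one_ne_zero x).hasFDerivAt
  have hmul : HasFDerivAt (fun z => (2 * f z) * fderiv ℝ f z v)
      ((2 * f x) • fderiv ℝ (fun z => fderiv ℝ f z v) x
        + (fderiv ℝ f x v) • ((2:ℝ) • fderiv ℝ f x)) x := by
    have h2f : HasFDerivAt (fun z => 2 * f z) ((2:ℝ) • fderiv ℝ f x) x :=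
      (hfd x).hasFDerivAt.const_mul 2
    exact h2f.mul hW
  rw [hmul.fderiv]
  simp only [ContinuousLinearMap.add_apply, ContinuousLinearMap.coe_smul', Pi.smul_apply,
    smul_eq_mul]
  ring


lemma fderiv_zero_outside {N : ℕ} {f : EuclideanSpace ℝ (Fin N) → ℝ} {x : EuclideanSpace ℝ (Fin N)}
    (hx : x ∉ tsupport f) : fderiv ℝ f x = 0 := by
  have hev : f =ᶠ[nhds x] (fun _ => (0:ℝ)) := by
    filter_upwards [(isClosed_tsupport f).isOpen_compl.mem_nhds hx] with y hy
    exact image_eq_zero_of_notMem_tsupport hy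
  rw [hev.fderiv_eq, fderiv_fun_const]; rfl

lemma lap_zero_outside {N : ℕ} {f : EuclideanSpace ℝ (Fin N) → ℝ} {x : EuclideanSpace ℝ (Fin N)}
    (hx : x ∉ tsupport f) : lap f x = 0 := by
  rw [lap]
  apply Finset.sum_eq_zero
  intro i _
  have hev : (fun z => fderiv ℝ f z (EuclideanSpace.single i 1)) =ᶠ[nhds x] (fun _ => (0:ℝ)) := by
    filter_upwards [(isClosed_tsupport f).isOpen_compl.mem_nhds hx] with y hy
    rw [fderiv_zero_outside hy]; rfl
  rw [hev.fderiv_eq, fderiv_fun_const]; rfl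


/-- the second weighted energy identity (Lemma 4.3 of the paper):
`d/dt ∫_Ω (2uu_t + a|u|²) Φ dx
  = 2∫_Ω uu_t ∂_tΦ dx + 2∫_Ω u_t² Φ dx − 2∫_Ω |∇u|² Φ dx + ∫_Ω (a ∂_tΦ + ΔΦ) u² dx`. -/
theorem stmt_16 (N : ℕ) (Ω : Set (EuclideanSpace ℝ (Fin N)))
    (hΩopen : IsOpen Ω) (hΩbdry : HasSmoothBoundary Ω)
    (a : EuclideanSpace ℝ (Fin N) → ℝ) (ha : ContinuousOn a (closure Ω))
    (hapos : ∀ x ∈ closure Ω, 0 ≤ a x)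
    (Φ : EuclideanSpace ℝ (Fin N) → ℝ → ℝ)
    (hΦ : ContDiff ℝ 2 (Function.uncurry Φ))
    (hΦpos : ∀ x ∈ closure Ω, ∀ t ≥ (0 : ℝ), 0 < Φ x t)
    (hΦt : ∀ x ∈ closure Ω, ∀ t ≥ (0 : ℝ), deriv (Φ x) t < 0)
    (u : EuclideanSpace ℝ (Fin N) → ℝ → ℝ)
    (hu : ContDiff ℝ 2 (Function.uncurry u))
    (hupde : ∀ x ∈ Ω, ∀ t > (0 : ℝ),
      deriv (deriv (u x)) t - lap (fun y => u y t) x + a x * deriv (u x) t = 0)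
    (hubdry : ∀ x ∈ frontier Ω, ∀ t > (0 : ℝ), u x t = 0)
    (husupp : ∀ T > (0 : ℝ), ∃ R > (0 : ℝ), ∀ t ∈ Set.Icc (0 : ℝ) T,
      tsupport (fun x => u x t) ⊆ Metric.ball (0 : EuclideanSpace ℝ (Fin N)) R) :
    ∀ t > (0 : ℝ),
      HasDerivAt
        (fun s => ∫ x in Ω,
          (2 * u x s * deriv (u x) s + a x * (u x s) ^ 2) * Φ x s)
        (2 * (∫ x in Ω, u x t * deriv (u x) t * deriv (Φ x) t)
          + 2 * (∫ x in Ω, (deriv (u x) t) ^ 2 * Φ x t)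
          - 2 * (∫ x in Ω, ‖gradient (fun y => u y t) x‖ ^ 2 * Φ x t)
          + ∫ x in Ω, (a x * deriv (Φ x) t + lap (fun y => Φ y t) x) * (u x t) ^ 2)
        t := by
  intro t ht
  have h21 : ((1:WithTop ℕ∞) + 1 : WithTop ℕ∞) ≤ 2 := by norm_num
  have h12 : (1:WithTop ℕ∞) ≤ 2 := by norm_num
  set T : ℝ := t + 1 with hT
  obtain ⟨R, hR, hsupp⟩ := husupp T (by linarith)
  set ε : ℝ := min t 1 with hε'
  have hε : 0 < ε := lt_min ht one_pos
  have hball_sub : ∀ s ∈ Metric.ball t ε, s ∈ Ioo (0:ℝ) T := by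
    intro s hs
    rw [Real.ball_eq_Ioo] at hs
    constructor
    · have := min_le_left t 1; have := hs.1; simp only [hε'] at *; linarith
    · have := min_le_right t 1; have := hs.2; simp only [hT] at *; linarith
  have htI : t ∈ Ioo (0:ℝ) T := ⟨ht, by linarith⟩
  -- derivative dictionaries
  set U₁ : EuclideanSpace ℝ (Fin N) × ℝ → ℝ :=
    fun p => fderiv ℝ (Function.uncurry u) p (0, 1) with hU₁def
  set P₁ : EuclideanSpace ℝ (Fin N) × ℝ → ℝ :=
    fun p => fderiv ℝ (Function.uncurry Φ) p (0, 1) with hP₁def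
  set U₂ : EuclideanSpace ℝ (Fin N) × ℝ → ℝ := fun p => fderiv ℝ U₁ p (0, 1) with hU₂def
  have hU₁cd : ContDiff ℝ 1 U₁ :=
    (ContinuousLinearMap.apply ℝ ℝ ((0 : EuclideanSpace ℝ (Fin N)), (1:ℝ))).contDiff.comp
      (hu.fderiv_right h21)
  have hP₁cd : ContDiff ℝ 1 P₁ :=
    (ContinuousLinearMap.apply ℝ ℝ ((0 : EuclideanSpace ℝ (Fin N)), (1:ℝ))).contDiff.comp
      (hΦ.fderiv_right h21)
  have hU₁c : Continuous U₁ := hU₁cd.continuous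
  have hP₁c : Continuous P₁ := hP₁cd.continuous
  have hU₂c : Continuous U₂ := (hU₁cd.continuous_fderiv one_ne_zero).clm_apply continuous_const
  have hd1 : ∀ x s, HasDerivAt (u x) (U₁ (x, s)) s := by
    intro x s
    exact ((hu.differentiable (by norm_num)) (x, s)).hasFDerivAt.comp_hasDerivAt s
      ((hasDerivAt_const s x).prodMk (hasDerivAt_id s))
  have hderiv_u : ∀ x s, deriv (u x) s = U₁ (x, s) := fun x s => (hd1 x s).deriv
  have hd2 : ∀ x s, HasDerivAt (deriv (u x)) (U₂ (x, s)) s := by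
    intro x s
    have heq : deriv (u x) = fun s' => U₁ (x, s') := funext (hderiv_u x)
    rw [heq]
    exact ((hU₁cd.differentiable one_ne_zero) (x, s)).hasFDerivAt.comp_hasDerivAt s
      ((hasDerivAt_const s x).prodMk (hasDerivAt_id s))
  have hderiv2_u : ∀ x s, deriv (deriv (u x)) s = U₂ (x, s) := fun x s => (hd2 x s).deriv
  have hdΦ : ∀ x s, HasDerivAt (Φ x) (P₁ (x, s)) s := by
    intro x s
    exact ((hΦ.differentiable (by norm_num)) (x, s)).hasFDerivAt.comp_hasDerivAt s
      ((hasDerivAt_const s x).prodMk (hasDerivAt_id s))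
  have hderiv_Φ : ∀ x s, deriv (Φ x) s = P₁ (x, s) := fun x s => (hdΦ x s).deriv
  -- support facts
  have hu0 : ∀ x, x ∉ Metric.ball (0 : EuclideanSpace ℝ (Fin N)) R →
      ∀ s ∈ Icc (0:ℝ) T, u x s = 0 := by
    intro x hx s hs
    exact image_eq_zero_of_notMem_tsupport (f := fun x' => u x' s) (fun hmem => hx (hsupp s hs hmem))
  have hU₁0 : ∀ x, x ∉ Metric.ball (0 : EuclideanSpace ℝ (Fin N)) R →
      ∀ s ∈ Ioo (0:ℝ) T, U₁ (x, s) = 0 := by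
    intro x hx s hs
    rw [← hderiv_u]
    have hev : u x =ᶠ[nhds s] (fun _ => (0:ℝ)) := by
      filter_upwards [isOpen_Ioo.mem_nhds hs] with s' hs'
      exact hu0 x hx s' (Ioo_subset_Icc_self hs')
    rw [hev.deriv_eq, deriv_const]
  have hU₂0 : ∀ x, x ∉ Metric.ball (0 : EuclideanSpace ℝ (Fin N)) R →
      ∀ s ∈ Ioo (0:ℝ) T, U₂ (x, s) = 0 := by
    intro x hx s hs
    rw [← hderiv2_u]
    have hev : deriv (u x) =ᶠ[nhds s] (fun _ => (0:ℝ)) := by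
      filter_upwards [isOpen_Ioo.mem_nhds hs] with s' hs'
      rw [hderiv_u]
      exact hU₁0 x hx s' hs'
    rw [hev.deriv_eq, deriv_const]
  -- integrability helper
  have haux_int : ∀ f : EuclideanSpace ℝ (Fin N) → ℝ, ContinuousOn f (closure Ω) →
      (∀ x, x ∉ Metric.ball (0 : EuclideanSpace ℝ (Fin N)) R → f x = 0) →
      IntegrableOn f Ω := by
    intro f hf h0
    have hmeas : AEStronglyMeasurable f (volume.restrict Ω) :=
      (hf.mono subset_closure).aestronglyMeasurable hΩopen.measurableSet
    have hK : IsCompact (closure Ω ∩ closedBall (0 : EuclideanSpace ℝ (Fin N)) R) :=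
      (isCompact_closedBall _ _).inter_left isClosed_closure
    obtain ⟨C, hC⟩ := hK.exists_bound_of_continuousOn (hf.mono inter_subset_left)
    apply Integrable.mono'
      (g := (closedBall (0 : EuclideanSpace ℝ (Fin N)) R).indicator (fun _ => max C 0))
    · exact ((integrableOn_const measure_closedBall_lt_top.ne).integrable_indicator
        measurableSet_closedBall).restrict
    · exact hmeas
    · rw [MeasureTheory.ae_restrict_iff' hΩopen.measurableSet]
      apply Filter.Eventually.of_forall
      intro x hxΩ
      by_cases hx : x ∈ closedBall (0 : EuclideanSpace ℝ (Fin N)) R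
      · rw [Set.indicator_of_mem hx]
        exact le_trans (hC x ⟨subset_closure hxΩ, hx⟩) (le_max_left _ _)
      · rw [Set.indicator_of_notMem hx, h0 x (fun hb => hx (ball_subset_closedBall hb))]
        simp
  -- the integrand and its time derivative
  set A : EuclideanSpace ℝ (Fin N) × ℝ → ℝ := fun p =>
    (2 * U₁ p ^ 2 + 2 * Function.uncurry u p * U₂ p) * Function.uncurry Φ p
      + (2 * Function.uncurry u p * U₁ p) * P₁ p with hAdef
  set B : EuclideanSpace ℝ (Fin N) × ℝ → ℝ := fun p =>
    (2 * Function.uncurry u p * U₁ p) * Function.uncurry Φ p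
      + (Function.uncurry u p) ^ 2 * P₁ p with hBdef
  have hAc : Continuous A := by
    apply Continuous.add
    · exact ((continuous_const.mul (hU₁c.pow 2)).add
        ((continuous_const.mul hu.continuous).mul hU₂c)).mul hΦ.continuous
    · exact ((continuous_const.mul hu.continuous).mul hU₁c).mul hP₁c
  have hBc : Continuous B := by
    apply Continuous.add
    · exact ((continuous_const.mul hu.continuous).mul hU₁c).mul hΦ.continuous
    · exact (hu.continuous.pow 2).mul hP₁c
  set F : ℝ → EuclideanSpace ℝ (Fin N) → ℝ := fun s x =>
    (2 * u x s * deriv (u x) s + a x * (u x s) ^ 2) * Φ x s with hFdef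
  set F' : ℝ → EuclideanSpace ℝ (Fin N) → ℝ := fun s x => A (x, s) + a x * B (x, s) with hF'def
  -- zero outside the ball
  have hA0 : ∀ x, x ∉ Metric.ball (0 : EuclideanSpace ℝ (Fin N)) R →
      ∀ s ∈ Ioo (0:ℝ) T, A (x, s) = 0 ∧ B (x, s) = 0 := by
    intro x hx s hs
    have h1 : Function.uncurry u (x, s) = 0 := hu0 x hx s (Ioo_subset_Icc_self hs)
    have h2 := hU₁0 x hx s hs
    have h3 := hU₂0 x hx s hs
    constructor
    · simp only [hAdef, h1, h2, h3]; ring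
    · simp only [hBdef, h1, h2]; ring
  -- measurability
  have hFmeas : ∀ s : ℝ, AEStronglyMeasurable (F s) (volume.restrict Ω) := by
    intro s
    have heq : F s = fun x =>
        (2 * u x s * U₁ (x, s) + a x * (u x s) ^ 2) * Φ x s := by
      funext x; rw [hFdef]; simp only []; rw [hderiv_u]
    rw [heq]
    apply ContinuousOn.aestronglyMeasurable _ hΩopen.measurableSet
    have hcu : Continuous fun x : EuclideanSpace ℝ (Fin N) => u x s :=
      hu.continuous.comp (continuous_id.prodMk continuous_const)
    have hcU : Continuous fun x : EuclideanSpace ℝ (Fin N) => U₁ (x, s) :=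
      hU₁c.comp (continuous_id.prodMk continuous_const)
    have hcΦ : Continuous fun x : EuclideanSpace ℝ (Fin N) => Φ x s :=
      hΦ.continuous.comp (continuous_id.prodMk continuous_const)
    exact (((continuous_const.mul hcu).mul hcU).continuousOn.add
      (((ha.mono subset_closure)).mul ((hcu.pow 2).continuousOn))).mul hcΦ.continuousOn
  -- integrability of F t
  have hFint : Integrable (F t) (volume.restrict Ω) := by
    apply haux_int
    · have hcu : Continuous fun x : EuclideanSpace ℝ (Fin N) => u x t :=
        hu.continuous.comp (continuous_id.prodMk continuous_const)
      have hcU : Continuous fun x : EuclideanSpace ℝ (Fin N) => U₁ (x, t) :=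
        hU₁c.comp (continuous_id.prodMk continuous_const)
      have hcΦ : Continuous fun x : EuclideanSpace ℝ (Fin N) => Φ x t :=
        hΦ.continuous.comp (continuous_id.prodMk continuous_const)
      have heq : F t = fun x =>
          (2 * u x t * U₁ (x, t) + a x * (u x t) ^ 2) * Φ x t := by
        funext x; rw [hFdef]; simp only []; rw [hderiv_u]
      rw [heq]
      exact (((continuous_const.mul hcu).mul hcU).continuousOn.add
        (ha.mul ((hcu.pow 2).continuousOn))).mul hcΦ.continuousOn
    · intro x hx
      rw [hFdef]
      simp only []
      rw [hderiv_u, hU₁0 x hx t htI, hu0 x hx t (Ioo_subset_Icc_self htI)]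
      ring
  have hF'meas : AEStronglyMeasurable (F' t) (volume.restrict Ω) := by
    apply ContinuousOn.aestronglyMeasurable _ hΩopen.measurableSet
    apply ContinuousOn.add
    · exact (hAc.comp (continuous_id.prodMk continuous_const)).continuousOn
    · exact (ha.mono subset_closure).mul
        (hBc.comp (continuous_id.prodMk continuous_const)).continuousOn
  -- bounds
  have hKA : IsCompact ((closedBall (0 : EuclideanSpace ℝ (Fin N)) R) ×ˢ Icc (t-1) (t+1)) :=
    (isCompact_closedBall _ _).prod isCompact_Icc
  obtain ⟨MA, hMA⟩ := hKA.exists_bound_of_continuousOn hAc.continuousOn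
  obtain ⟨MB, hMB⟩ := hKA.exists_bound_of_continuousOn hBc.continuousOn
  have hKa : IsCompact (closure Ω ∩ closedBall (0 : EuclideanSpace ℝ (Fin N)) R) :=
    (isCompact_closedBall _ _).inter_left isClosed_closure
  obtain ⟨Ma, hMa⟩ := hKa.exists_bound_of_continuousOn (ha.mono inter_subset_left)
  set bound : EuclideanSpace ℝ (Fin N) → ℝ :=
    (Metric.ball (0 : EuclideanSpace ℝ (Fin N)) R).indicator (fun _ => MA + Ma * MB)
    with hbounddef
  have hball_mem : ∀ s ∈ Metric.ball t ε, s ∈ Icc (t-1) (t+1) := by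
    intro s hs
    rw [Real.ball_eq_Ioo] at hs
    have h1 := min_le_right t 1
    constructor
    · have := hs.1; simp only [hε'] at this ⊢; linarith
    · have := hs.2; simp only [hε'] at this ⊢; linarith
  have h_bound : ∀ᵐ x ∂(volume.restrict Ω), ∀ s ∈ Metric.ball t ε, ‖F' s x‖ ≤ bound x := by
    rw [MeasureTheory.ae_restrict_iff' hΩopen.measurableSet]
    apply Filter.Eventually.of_forall
    intro x hxΩ s hs
    by_cases hx : x ∈ Metric.ball (0 : EuclideanSpace ℝ (Fin N)) R
    · rw [hbounddef]
      rw [Set.indicator_of_mem hx]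
      have hxK : (x, s) ∈ (closedBall (0 : EuclideanSpace ℝ (Fin N)) R) ×ˢ Icc (t-1) (t+1) :=
        ⟨ball_subset_closedBall hx, hball_mem s hs⟩
      have h1 := hMA _ hxK
      have h2 := hMB _ hxK
      have h3 := hMa x ⟨subset_closure hxΩ, ball_subset_closedBall hx⟩
      have habs : ‖F' s x‖ ≤ ‖A (x, s)‖ + ‖a x‖ * ‖B (x, s)‖ := by
        rw [hF'def]
        simp only []
        calc |A (x, s) + a x * B (x, s)| ≤ |A (x, s)| + |a x * B (x, s)| := abs_add_le _ _
          _ = |A (x, s)| + |a x| * |B (x, s)| := by rw [abs_mul]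
      refine le_trans habs ?_
      have : ‖a x‖ * ‖B (x, s)‖ ≤ Ma * MB :=
        mul_le_mul h3 h2 (norm_nonneg _) (le_trans (norm_nonneg _) h3)
      linarith
    · obtain ⟨hA0', hB0'⟩ := hA0 x hx s (hball_sub s hs)
      rw [hbounddef, Set.indicator_of_notMem hx, hF'def]
      simp only [hA0', hB0']
      simp
  have hbound_int : Integrable bound (volume.restrict Ω) :=
    ((integrableOn_const measure_ball_lt_top.ne).integrable_indicator
      measurableSet_ball).restrict
  have h_diff : ∀ᵐ x ∂(volume.restrict Ω), ∀ s ∈ Metric.ball t ε,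
      HasDerivAt (fun s' => F s' x) (F' s x) s := by
    apply Filter.Eventually.of_forall
    intro x s _
    have heq : (fun s' => F s' x)
        = fun s' => (2 * u x s' * U₁ (x, s') + a x * (u x s') ^ 2) * Φ x s' := by
      funext s'; rw [hFdef]; simp only []; rw [hderiv_u]
    rw [heq]
    have hd2' : HasDerivAt (fun s' => U₁ (x, s')) (U₂ (x, s)) s := by
      have := hd2 x s
      rwa [show deriv (u x) = fun s' => U₁ (x, s') from funext (hderiv_u x)] at this
    have hbig : HasDerivAt (fun s' => (2 * u x s' * U₁ (x, s') + a x * (u x s') ^ 2) * Φ x s') _ s := ((((hd1 x s).const_mul 2).mul hd2').add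
      (((hd1 x s).pow 2).const_mul (a x))).mul (hdΦ x s)
    convert hbig using 1
    rw [hF'def, hAdef, hBdef]
    simp only [Function.uncurry_apply_pair, Pi.add_apply, Pi.mul_apply, Pi.pow_apply]
    ring
  obtain ⟨-, hderiv⟩ := hasDerivAt_integral_of_dominated_loc_of_deriv_le (Metric.ball_mem_nhds t hε)
    (Filter.Eventually.of_forall hFmeas) hFint hF'meas h_bound hbound_int h_diff
  -- slice regularity
  have hw0cd : ContDiff ℝ 2 (fun y => u y t) := hu.comp (contDiff_id.prodMk contDiff_const)
  have hΦ₀cd : ContDiff ℝ 2 (fun y => Φ y t) := hΦ.comp (contDiff_id.prodMk contDiff_const)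
  have hwcd : ContDiff ℝ 2 (fun y => u y t ^ 2) := hw0cd.pow 2
  have hw0supp : tsupport (fun y => u y t) ⊆ Metric.ball (0 : EuclideanSpace ℝ (Fin N)) R :=
    hsupp t (Ioo_subset_Icc_self htI)
  have hwsupp : tsupport (fun y => u y t ^ 2) ⊆ tsupport (fun y => u y t) := by
    apply closure_minimal _ (isClosed_tsupport _)
    intro y hy
    apply subset_tsupport
    simp only [Function.mem_support] at hy ⊢
    exact fun h0 => hy (by rw [h0]; ring)
  have hw_out : ∀ x, x ∉ Metric.ball (0 : EuclideanSpace ℝ (Fin N)) R →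
      x ∉ tsupport (fun y => u y t ^ 2) := fun x hx hmem => hx (hw0supp (hwsupp hmem))
  have hwc : HasCompactSupport (fun y => u y t ^ 2) :=
    IsCompact.of_isClosed_subset (isCompact_closedBall _ R) (isClosed_tsupport _)
      ((hwsupp.trans hw0supp).trans ball_subset_closedBall)
  have hfd_w : ∀ x, fderiv ℝ (fun y => u y t ^ 2) x
      = (2 * u x t) • fderiv ℝ (fun y => u y t) x := by
    intro x
    have hfd : DifferentiableAt ℝ (fun y => u y t) x := (hw0cd.differentiable (by norm_num)) x
    have h := (show HasFDerivAt (fun y => u y t * u y t) _ x from hfd.hasFDerivAt.mul hfd.hasFDerivAt).fderiv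
    have heq : (fun y => u y t ^ 2) = fun y => u y t * u y t := by funext y; ring
    rw [heq, h]
    ext v
    simp only [ContinuousLinearMap.add_apply, ContinuousLinearMap.coe_smul', Pi.smul_apply,
      smul_eq_mul]
    ring
  have hwfr0 : ∀ x ∈ frontier Ω, (fun y => u y t ^ 2) x = 0 := by
    intro x hx; simp [hubdry x hx t ht]
  have hwfr1 : ∀ x ∈ frontier Ω, fderiv ℝ (fun y => u y t ^ 2) x = 0 := by
    intro x hx; rw [hfd_w, hubdry x hx t ht]; simp
  have hGzero := green hΩopen hΦ₀cd hwcd hwc hwfr0 hwfr1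
  -- continuity of laplacians
  have hlap_cont : ∀ (f : EuclideanSpace ℝ (Fin N) → ℝ), ContDiff ℝ 2 f →
      Continuous (fun x => lap f x) := by
    intro f hf
    apply continuous_finset_sum
    intro i _
    have hWi : ContDiff ℝ 1 (fun z => fderiv ℝ f z (EuclideanSpace.single i 1)) :=
      (ContinuousLinearMap.apply ℝ ℝ (EuclideanSpace.single i (1:ℝ))).contDiff.comp
        (hf.fderiv_right h21)
    exact (hWi.continuous_fderiv one_ne_zero).clm_apply continuous_const
  -- the four statement integrands
  have hcu : Continuous fun x : EuclideanSpace ℝ (Fin N) => u x t :=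
    hu.continuous.comp (continuous_id.prodMk continuous_const)
  have hcU : Continuous fun x : EuclideanSpace ℝ (Fin N) => U₁ (x, t) :=
    hU₁c.comp (continuous_id.prodMk continuous_const)
  have hcP : Continuous fun x : EuclideanSpace ℝ (Fin N) => P₁ (x, t) :=
    hP₁c.comp (continuous_id.prodMk continuous_const)
  have hcΦt : Continuous fun x : EuclideanSpace ℝ (Fin N) => Φ x t :=
    hΦ.continuous.comp (continuous_id.prodMk continuous_const)
  have hgrad_eq : ∀ x, gradient (fun y => u y t) x
      = (InnerProductSpace.toDual ℝ (EuclideanSpace ℝ (Fin N))).symm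
          (fderiv ℝ (fun y => u y t) x) := fun _ => rfl
  have hgradc : Continuous fun x => gradient (fun y => u y t) x := by
    simp only [hgrad_eq]
    exact (LinearIsometryEquiv.continuous _).comp (hw0cd.continuous_fderiv (by norm_num))
  have hI1int : IntegrableOn (fun x => u x t * deriv (u x) t * deriv (Φ x) t) Ω := by
    apply haux_int
    · have heq : (fun x => u x t * deriv (u x) t * deriv (Φ x) t)
          = fun x => u x t * U₁ (x, t) * P₁ (x, t) := by
        funext x; rw [hderiv_u, hderiv_Φ]
      rw [heq]
      exact (((hcu.mul hcU).mul hcP)).continuousOn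
    · intro x hx
      rw [hu0 x hx t (Ioo_subset_Icc_self htI)]; ring
  have hI2int : IntegrableOn (fun x => (deriv (u x) t) ^ 2 * Φ x t) Ω := by
    apply haux_int
    · have heq : (fun x => (deriv (u x) t) ^ 2 * Φ x t)
          = fun x => U₁ (x, t) ^ 2 * Φ x t := by
        funext x; rw [hderiv_u]
      rw [heq]
      exact (((hcU.pow 2).mul hcΦt)).continuousOn
    · intro x hx
      rw [hderiv_u, hU₁0 x hx t htI]; ring
  have hI3int : IntegrableOn (fun x => ‖gradient (fun y => u y t) x‖ ^ 2 * Φ x t) Ω := by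
    apply haux_int
    · exact (((hgradc.norm.pow 2).mul hcΦt)).continuousOn
    · intro x hx
      have hxt : x ∉ tsupport (fun y => u y t) := fun hmem => hx (hw0supp hmem)
      rw [hgrad_eq, fderiv_zero_outside hxt, map_zero]
      simp
  have hI4int : IntegrableOn
      (fun x => (a x * deriv (Φ x) t + lap (fun y => Φ y t) x) * (u x t) ^ 2) Ω := by
    apply haux_int
    · have heq : (fun x => (a x * deriv (Φ x) t + lap (fun y => Φ y t) x) * (u x t) ^ 2)
          = fun x => (a x * P₁ (x, t) + lap (fun y => Φ y t) x) * (u x t) ^ 2 := by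
        funext x; rw [hderiv_Φ]
      rw [heq]
      exact ((ha.mul hcP.continuousOn).add (hlap_cont _ hΦ₀cd).continuousOn).mul
        ((hcu.pow 2).continuousOn)
    · intro x hx
      rw [hu0 x hx t (Ioo_subset_Icc_self htI)]; ring
  have hGint : IntegrableOn
      (fun x => Φ x t * lap (fun y => u y t ^ 2) x
        - u x t ^ 2 * lap (fun y => Φ y t) x) Ω := by
    apply haux_int
    · exact ((hcΦt.mul (hlap_cont _ hwcd)).sub
        ((hcu.pow 2).mul (hlap_cont _ hΦ₀cd))).continuousOn
    · intro x hx
      have hxt := hw_out x hx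
      rw [lap_zero_outside hxt, hu0 x hx t (Ioo_subset_Icc_self htI)]
      ring
  -- pointwise identity on Ω
  have hsplit : Set.EqOn (F' t)
      (fun x => (2 * (u x t * deriv (u x) t * deriv (Φ x) t)
        + 2 * ((deriv (u x) t) ^ 2 * Φ x t)
        - 2 * (‖gradient (fun y => u y t) x‖ ^ 2 * Φ x t)
        + (a x * deriv (Φ x) t + lap (fun y => Φ y t) x) * (u x t) ^ 2)
        + (Φ x t * lap (fun y => u y t ^ 2) x
          - u x t ^ 2 * lap (fun y => Φ y t) x)) Ω := by
    intro x hx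
    have hpde := hupde x hx t ht
    rw [hderiv2_u, hderiv_u] at hpde
    have hU2eq : U₂ (x, t) = lap (fun y => u y t) x - a x * U₁ (x, t) := by linarith
    have hlapw := lap_sq hw0cd x
    simp only [hF'def, hAdef, hBdef, Function.uncurry_apply_pair]
    rw [hderiv_u, hderiv_Φ, hU2eq, hlapw]
    ring
  -- value of the derivative
  have hval : 2 * (∫ x in Ω, u x t * deriv (u x) t * deriv (Φ x) t)
      + 2 * (∫ x in Ω, (deriv (u x) t) ^ 2 * Φ x t)
      - 2 * (∫ x in Ω, ‖gradient (fun y => u y t) x‖ ^ 2 * Φ x t)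
      + (∫ x in Ω, (a x * deriv (Φ x) t + lap (fun y => Φ y t) x) * (u x t) ^ 2)
      = ∫ x, F' t x ∂(volume.restrict Ω) := by
    rw [MeasureTheory.setIntegral_congr_fun hΩopen.measurableSet hsplit]
    have e1 : Integrable (fun x => 2 * (u x t * deriv (u x) t * deriv (Φ x) t)
        + 2 * ((deriv (u x) t) ^ 2 * Φ x t)) (volume.restrict Ω) :=
      (hI1int.const_mul 2).add (hI2int.const_mul 2)
    have e2 : Integrable (fun x => 2 * (u x t * deriv (u x) t * deriv (Φ x) t)
        + 2 * ((deriv (u x) t) ^ 2 * Φ x t)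
        - 2 * (‖gradient (fun y => u y t) x‖ ^ 2 * Φ x t)) (volume.restrict Ω) :=
      e1.sub (hI3int.const_mul 2)
    have e3 : Integrable (fun x => 2 * (u x t * deriv (u x) t * deriv (Φ x) t)
        + 2 * ((deriv (u x) t) ^ 2 * Φ x t)
        - 2 * (‖gradient (fun y => u y t) x‖ ^ 2 * Φ x t)
        + (a x * deriv (Φ x) t + lap (fun y => Φ y t) x) * (u x t) ^ 2) (volume.restrict Ω) :=
      e2.add hI4int
    rw [MeasureTheory.integral_add e3 hGint]
    rw [hGzero, add_zero]
    rw [MeasureTheory.integral_add e2 hI4int]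
    rw [MeasureTheory.integral_sub e1 (hI3int.const_mul 2)]
    rw [MeasureTheory.integral_add (hI1int.const_mul 2) (hI2int.const_mul 2)]
    rw [MeasureTheory.integral_const_mul, MeasureTheory.integral_const_mul,
      MeasureTheory.integral_const_mul]
  rw [hval]
  exact hderiv
end
end
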